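/- Let G and H be reflexive undirected graphs, α, β : G → H homomorphisms, q ∈ V(G), and let Q be a reduced walk from α(q) to β(q). Then Q is H-realizable for α, β, q (i.e., Q = S(q) for some H-recoloring sequence S from α to β in the Hom₁ sense satisfying the push-or-pull property) if and only if both of the following hold: (1) Q is topologically valid for α, β, q; and (2) for every α-tight closed walk in G, every vertex v on this walk, and every walk W from v to q in G, Q = α(W)⁻¹ · β(W) in π(H). -/

import Mathlib

namespace HRecoloring

/-- A digraph: a vertex type together with an arc relation. -/
structure Dgraph (V : Type) where
  Adj : V → V → Prop

variable {V X : Type}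

/-- Adjacency in the underlying undirected graph. -/
def Dgraph.UAdj (G : Dgraph V) (u v : V) : Prop := G.Adj u v ∨ G.Adj v u

/-- A digraph is loopless if it has no arc `v → v`. -/
def Dgraph.Loopless (G : Dgraph V) : Prop := ∀ v, ¬ G.Adj v v

/-- A digraph is reflexive if `v → v` for every vertex `v`. -/
def Dgraph.IsReflexive (G : Dgraph V) : Prop := ∀ v, G.Adj v v

/-- A symmetric digraph, which we identify with an undirected graph. -/
def Dgraph.IsSymmetric (G : Dgraph V) : Prop := ∀ u v, G.Adj u v → G.Adj v u

/-- The underlying undirected graph, as a symmetric digraph. -/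
def Dgraph.usym (G : Dgraph V) : Dgraph V := ⟨fun u v => G.UAdj u v⟩

/-- A (di)graph homomorphism. -/
def IsHom (G : Dgraph V) (H : Dgraph X) (f : V → X) : Prop :=
  ∀ ⦃u v⦄, G.Adj u v → H.Adj (f u) (f v)

/-- A walk from `a` to `b`, encoded by its list of successive vertices.
A walk in a digraph is a walk in its underlying undirected graph. -/
def IsWalk (G : Dgraph V) (a b : V) (l : List V) : Prop :=
  l ≠ [] ∧ l.head? = some a ∧ l.getLast? = some b ∧ l.Chain' G.UAdj

/-- Weak connectivity. -/
def Dgraph.WConn (G : Dgraph V) : Prop := ∀ u v : V, ∃ l, IsWalk G u v l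

/-- Concatenation of two walks sharing an endpoint. -/
def wcomp (l₁ l₂ : List V) : List V := l₁ ++ l₂.tail

/-- Number of edges of a walk. -/
def wlen (l : List V) : ℕ := l.length - 1

/-- One reduction step on walks: delete a backtracking pair `(x y)(y x)` or a
one-edge loop step `(x x)`. -/
def RStep (l l' : List V) : Prop :=
  (∃ (p s : List V) (x y : V), l = p ++ [x, y, x] ++ s ∧ l' = p ++ [x] ++ s) ∨
  (∃ (p s : List V) (x : V), l = p ++ [x, x] ++ s ∧ l' = p ++ [x] ++ s)

/-- Equality of walks in the fundamental groupoid `π(H)`: the equivalence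
generated by reduction steps (two walks are equal in `π(H)` iff they reduce to
the same reduced walk). -/
def PiEq (l l' : List V) : Prop := Relation.EqvGen RStep l l'

/-- A walk is reduced if no reduction step applies to it. -/
def IsReduced (l : List V) : Prop := ∀ l', ¬ RStep l l'

/-- A closed walk is cyclically reduced if it is reduced and its first and last
edges are not inverses of each other. -/
def IsCycReduced (l : List V) : Prop :=
  IsReduced l ∧ ∃ h : 2 ≤ l.length,
    l.get ⟨1, by omega⟩ ≠ l.get ⟨l.length - 2, by omega⟩

/-- `n`-fold concatenation of a closed walk `R` based at `h`. -/
def witer (R : List V) (h : V) : ℕ → List V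
  | 0 => [h]
  | n + 1 => wcomp R (witer R h n)

/-- `Rⁿ` for an integer `n`, for a closed walk `R` based at `h`; for `n < 0`
this is the `|n|`-fold concatenation of the reversed walk `R⁻¹`. -/
def zpowWalk (R : List V) (h : V) (n : ℤ) : List V :=
  if 0 ≤ n then witer R h n.toNat else witer R.reverse h (-n).toNat

/-- A walk is symmetric if every edge it traverses is a symmetric arc. -/
def IsSymWalk (H : Dgraph X) (l : List X) : Prop :=
  l.Chain' fun a b => H.Adj a b ∧ H.Adj b a

/-- The conjugated walk `α(W)⁻¹ · Q · β(W)`. -/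
def conj (α β : V → X) (Wl : List V) (Q : List X) : List X :=
  wcomp (wcomp (Wl.map α).reverse Q) (Wl.map β)

/-- Topological validity of a walk `Q` from `α q` to `β q`:
`β(C) = Q⁻¹ · α(C) · Q` in `π(H)` for every closed walk `C` at `q`. -/
def TopValid (G : Dgraph V) (H : Dgraph X) (α β : V → X) (q : V) (Q : List X) : Prop :=
  ∀ C : List V, IsWalk G q q C →
    PiEq (C.map β) (wcomp (wcomp Q.reverse (C.map α)) Q)

/-- IN-zigzag pattern `a₁ ← a₂ → a₃ ← … ← a_{n-1} → a_n`. -/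
def INCompatible (H : Dgraph X) (l : List X) : Prop :=
  ∀ (i : ℕ) (h : i + 1 < l.length),
    if i % 2 = 0 then H.Adj (l.get ⟨i + 1, h⟩) (l.get ⟨i, by omega⟩)
    else H.Adj (l.get ⟨i, by omega⟩) (l.get ⟨i + 1, h⟩)

/-- OUT-zigzag pattern `a₁ → a₂ ← a₃ → … → a_{n-1} ← a_n`. -/
def OUTCompatible (H : Dgraph X) (l : List X) : Prop :=
  ∀ (i : ℕ) (h : i + 1 < l.length),
    if i % 2 = 0 then H.Adj (l.get ⟨i, by omega⟩) (l.get ⟨i + 1, h⟩)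
    else H.Adj (l.get ⟨i + 1, h⟩) (l.get ⟨i, by omega⟩)

/-- A vertex is of type IN if it has an in-neighbor. -/
def TypeIN (G : Dgraph V) (v : V) : Prop := ∃ u, G.Adj u v

/-- A vertex is of type OUT if it has an out-neighbor. -/
def TypeOUT (G : Dgraph V) (v : V) : Prop := ∃ u, G.Adj v u

/-- A vertex is of type SYM if it is of type IN and of type OUT. -/
def TypeSYM (G : Dgraph V) (v : V) : Prop := TypeIN G v ∧ TypeOUT G v

/-- The zigzag condition for the vertex `v`. -/
def Zigzag (G : Dgraph V) (H : Dgraph X) (v : V) (l : List X) : Prop :=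
  (TypeIN G v → INCompatible H l) ∧ (TypeOUT G v → OUTCompatible H l)

/-- A recoloring sequence: a nonempty sequence of homomorphisms in which
consecutive homomorphisms differ on exactly one vertex. -/
def IsRecolSeq (G : Dgraph V) (H : Dgraph X) (σs : List (V → X)) : Prop :=
  σs ≠ [] ∧ (∀ σ ∈ σs, IsHom G H σ) ∧ σs.Chain' fun σ σ' => ∃! u, σ u ≠ σ' u

/-- The monochromatic neighborhood property: whenever a vertex changes its
color, all of its neighbors (in the underlying undirected graph) have one
common color. -/
def MonoNbhd (G : Dgraph V) (σs : List (V → X)) : Prop :=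
  σs.Chain' fun σ σ' => ∀ v, σ v ≠ σ' v → ∃ h, ∀ w, G.UAdj v w → σ w = h

/-- `VWalk G v σs S`: `S` is the vertex walk `S(v)` of the recoloring sequence
`σs`; each color change of `v` from `a` to `b`, while all neighbors of `v` are
colored `h`, contributes the two edges `(a h)(h b)`. -/
inductive VWalk (G : Dgraph V) (v : V) : List (V → X) → List X → Prop
  | single (σ : V → X) : VWalk G v [σ] [σ v]
  | stay {σ σ' : V → X} {rest : List (V → X)} {l : List X} :
      σ v = σ' v → VWalk G v (σ' :: rest) l → VWalk G v (σ :: σ' :: rest) l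
  | move {σ σ' : V → X} {rest : List (V → X)} {l : List X} (h : X) :
      σ v ≠ σ' v → (∀ w, G.UAdj v w → σ w = h) →
      VWalk G v (σ' :: rest) l → VWalk G v (σ :: σ' :: rest) (σ v :: h :: l)

/-- `H`-realizability of a walk `Q` via recoloring sequences satisfying the
monochromatic neighborhood property: `Q = S(q)` in `π(H)`. -/
def MRealizable (G : Dgraph V) (H : Dgraph X) (α β : V → X) (q : V) (Q : List X) : Prop :=
  ∃ (σs : List (V → X)) (Sq : List X),
    IsRecolSeq G H σs ∧ σs.head? = some α ∧ σs.getLast? = some β ∧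
    MonoNbhd G σs ∧ VWalk G q σs Sq ∧ PiEq Sq Q

/-- Orientation compatibility of a walk `Q`: every generated vertex walk
satisfies the zigzag condition. -/
def OrientCompatible (G : Dgraph V) (H : Dgraph X) (α β : V → X) (q : V) (Q : List X) : Prop :=
  ∀ (v : V) (Wl : List V), IsWalk G q v Wl →
    ∀ S : List X, IsReduced S → PiEq (conj α β Wl Q) S → Zigzag G H v S

/-- Hom₁-adjacency: the homomorphisms differ on exactly one vertex and, for
every arc `x → y` of `G`, both `φ x → ψ y` and `ψ x → φ y` are arcs of `H`. -/
def Hom1Adj (G : Dgraph V) (H : Dgraph X) (φ ψ : V → X) : Prop :=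
  (∃! u, φ u ≠ ψ u) ∧ ∀ ⦃x y⦄, G.Adj x y → H.Adj (φ x) (ψ y) ∧ H.Adj (ψ x) (φ y)

/-- A recoloring sequence in the Hom₁ sense (digraphs). -/
def Hom1Seq (G : Dgraph V) (H : Dgraph X) (σs : List (V → X)) : Prop :=
  σs ≠ [] ∧ (∀ σ ∈ σs, IsHom G H σ) ∧ σs.Chain' (Hom1Adj G H)

/-- A recoloring sequence in which each step recolors exactly one vertex to an
adjacent color (the Hom₁ sense for reflexive undirected graphs). -/
def AdjRecolSeq (G : Dgraph V) (H : Dgraph X) (σs : List (V → X)) : Prop :=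
  σs ≠ [] ∧ (∀ σ ∈ σs, IsHom G H σ) ∧
  σs.Chain' fun σ σ' => (∃! u, σ u ≠ σ' u) ∧ ∀ u, σ u ≠ σ' u → H.Adj (σ u) (σ' u)

/-- The push-or-pull property: whenever a vertex changes its color from `a` to
`b`, every neighbor of that vertex has color `a` or `b`. -/
def PushOrPull (G : Dgraph V) (σs : List (V → X)) : Prop :=
  σs.Chain' fun σ σ' => ∀ u, σ u ≠ σ' u → ∀ w, G.UAdj u w → σ w = σ u ∨ σ w = σ' u

/-- The walk of successive colors of `v` along a recoloring sequence. -/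
def colorWalk (σs : List (V → X)) (v : V) : List X := σs.map fun σ => σ v

/-- `H`-realizability via recoloring sequences (reflexive undirected Hom₁
sense) satisfying the push-or-pull property. -/
def PRealizable (G : Dgraph V) (H : Dgraph X) (α β : V → X) (q : V) (Q : List X) : Prop :=
  ∃ σs : List (V → X), AdjRecolSeq G H σs ∧ σs.head? = some α ∧ σs.getLast? = some β ∧
    PushOrPull G σs ∧ PiEq (colorWalk σs q) Q

/-- `H`-realizability via Hom₁ recoloring sequences of digraphs satisfying the
push-or-pull property. -/
def DRealizable (G : Dgraph V) (H : Dgraph X) (α β : V → X) (q : V) (Q : List X) : Prop :=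
  ∃ σs : List (V → X), Hom1Seq G H σs ∧ σs.head? = some α ∧ σs.getLast? = some β ∧
    PushOrPull G σs ∧ PiEq (colorWalk σs q) Q

/-- `H` contains no 4-cycle of algebraic girth 0 as a subgraph (neither of the
two orientations of the 4-cycle with two forward and two backward arcs). -/
def NoZeroGirthC4 (H : Dgraph X) : Prop :=
  ∀ a b c d : X, a ≠ b → a ≠ c → a ≠ d → b ≠ c → b ≠ d → c ≠ d →
    ¬(H.Adj a b ∧ H.Adj b d ∧ H.Adj a c ∧ H.Adj c d) ∧
    ¬(H.Adj a b ∧ H.Adj d b ∧ H.Adj a c ∧ H.Adj d c)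

/-- `H` contains no triangle of algebraic girth 1 as a subgraph. -/
def NoOneGirthTriangle (H : Dgraph X) : Prop :=
  ∀ x y z : X, x ≠ y → y ≠ z → x ≠ z → ¬(H.Adj x y ∧ H.Adj y z ∧ H.Adj x z)

/-- A path in the reconfiguration graph `R_H(G)` from `α` to `β`. -/
def IsRPath (G : Dgraph V) (H : Dgraph X) (α β : V → X) (L : List (V → X)) : Prop :=
  L ≠ [] ∧ L.head? = some α ∧ L.getLast? = some β ∧
  (∀ σ ∈ L, IsHom G H σ) ∧ L.Chain' fun φ ψ => ∃! u, φ u ≠ ψ u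

/-- A path in the graph `Hom₁(G, H)` from `α` to `β`. -/
def IsHom1Path (G : Dgraph V) (H : Dgraph X) (α β : V → X) (L : List (V → X)) : Prop :=
  L ≠ [] ∧ L.head? = some α ∧ L.getLast? = some β ∧
  (∀ σ ∈ L, IsHom G H σ) ∧ L.Chain' (Hom1Adj G H)

/-- The set of reduced walks `Q` from `α q` to `β q` that generate symmetric
vertex walks on `V'` with the system of walks `Wf`. -/
def SymGenSet (H : Dgraph X) (α β : V → X) (q : V)
    (V' : Set V) (Wf : V → List V) : Set (List X) :=
  {Q | IsWalk H (α q) (β q) Q ∧ IsReduced Q ∧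
    ∀ v ∈ V', ∀ S : List X, IsReduced S → PiEq (conj α β (Wf v) Q) S → IsSymWalk H S}

/-- The set of orientation-compatible walks for `q` and the system `Uf`. -/
def OCSet (G : Dgraph V) (H : Dgraph X) (α β : V → X) (q : V)
    (Uf : V → List V) : Set (List X) :=
  {Q | IsWalk H (α q) (β q) Q ∧ IsReduced Q ∧ Even (wlen Q) ∧
    ∀ (v : V) (S : List X), IsReduced S → PiEq (conj α β (Uf v) Q) S → Zigzag G H v S}

/-- The set `Π_q` of walks from `α q` to `β q` that are `H`-realizable via
recoloring sequences satisfying the monochromatic neighborhood property. -/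
def MRealSet (G : Dgraph V) (H : Dgraph X) (α β : V → X) (q : V) : Set (List X) :=
  {Q | IsWalk H (α q) (β q) Q ∧ IsReduced Q ∧ MRealizable G H α β q Q}

/-- The set of walks from `α q` to `β q` that are `H`-realizable via
recoloring sequences satisfying the push-or-pull property. -/
def PRealSet (G : Dgraph V) (H : Dgraph X) (α β : V → X) (q : V) : Set (List X) :=
  {Q | IsWalk H (α q) (β q) Q ∧ IsReduced Q ∧ PRealizable G H α β q Q}

/-- Ceiling division on natural numbers. -/
def cdiv (a b : ℕ) : ℕ := (a + b - 1) / b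

/-!
Necessity. Along a push-or-pull sequence from `σ₀` to `σL`, the colours of the two ends of an
edge before and after a step span a commuting square in `π(H)`; pasting squares gives
`σ₀(W) · S(v) = S(u) · σL(W)` for every walk `W` from `u` to `v`, and closed walks at `q` give
topological validity. A vertex on an `α`-tight closed walk never moves: its two neighbours on
the walk carry two further distinct colours, which push-or-pull forbids. So `S(v)` is trivial
for such `v`, and the identity for `W` yields `Q = α(W)⁻¹ · β(W)`.

Sufficiency. Keep a push-or-pull sequence from `α` to `σ` and, for every vertex `v`, a reduced
walk `P v` from `σ v` to `β v`, such that `σ(u) · P(w) = P(u) · β(w)` along edges and the colour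
walk of `v` followed by `P v` is `α(W)⁻¹ · Q · β(W)`; topological validity provides the start.
A vertex whose neighbours all have its colour or the next colour on `P v` advances one step,
which shortens the total length. If no vertex can advance, every unfinished vertex has a
neighbour blocking it whose remaining walk starts back towards it; following blocking
neighbours closes a cycle whose colouring is cyclically reduced, hence frozen back to `α` and
`α`-tight. Condition (2) then forces the remaining walks along the cycle to have at most three
vertices, with `β` repeating the current colours after a delay of one or two steps, and
comparing condition (2) for two walks through adjacent cycle vertices gives a reduced walk of
length three or four homotopic to one of length two.
-/

section Reduction

variable {A : Type}

theorem rStep_backtrack (p s : List A) (x y : A) :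
    RStep (p ++ [x, y, x] ++ s) (p ++ [x] ++ s) :=
  Or.inl ⟨p, s, x, y, rfl, rfl⟩

theorem rStep_stutter (p s : List A) (x : A) : RStep (p ++ [x, x] ++ s) (p ++ [x] ++ s) :=
  Or.inr ⟨p, s, x, rfl, rfl⟩

namespace RStep

variable {l l' : List A}

theorem append_right (h : RStep l l') (t : List A) : RStep (l ++ t) (l' ++ t) := by
  rcases h with ⟨p, s, x, y, rfl, rfl⟩ | ⟨p, s, x, rfl, rfl⟩
  · exact Or.inl ⟨p, s ++ t, x, y, by simp, by simp⟩
  · exact Or.inr ⟨p, s ++ t, x, by simp, by simp⟩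

theorem append_left (h : RStep l l') (t : List A) : RStep (t ++ l) (t ++ l') := by
  rcases h with ⟨p, s, x, y, rfl, rfl⟩ | ⟨p, s, x, rfl, rfl⟩
  · exact Or.inl ⟨t ++ p, s, x, y, by simp, by simp⟩
  · exact Or.inr ⟨t ++ p, s, x, by simp, by simp⟩

theorem reverse (h : RStep l l') : RStep l.reverse l'.reverse := by
  rcases h with ⟨p, s, x, y, rfl, rfl⟩ | ⟨p, s, x, rfl, rfl⟩
  · exact Or.inl ⟨s.reverse, p.reverse, x, y, by simp, by simp⟩
  · exact Or.inr ⟨s.reverse, p.reverse, x, by simp, by simp⟩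

theorem head?_eq (h : RStep l l') : l.head? = l'.head? := by
  rcases h with ⟨p, s, x, y, rfl, rfl⟩ | ⟨p, s, x, rfl, rfl⟩ <;> cases p <;> simp

theorem getLast?_eq (h : RStep l l') : l.getLast? = l'.getLast? := by
  simpa using h.reverse.head?_eq

theorem isChain {R : A → A → Prop} (h : RStep l l') (hl : l.IsChain R) : l'.IsChain R := by
  rcases h with ⟨p, s, x, y, rfl, rfl⟩ | ⟨p, s, x, rfl, rfl⟩
  · rcases s with _ | ⟨z, s⟩ <;>
      simp_all [List.isChain_append, List.isChain_cons_cons]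
  · rcases s with _ | ⟨z, s⟩ <;>
      simp_all [List.isChain_append, List.isChain_cons_cons]

end RStep

namespace PiEq

variable {l l' l'' : List A}

@[refl, simp] theorem refl (l : List A) : PiEq l l := Relation.EqvGen.refl l

@[symm] theorem symm (h : PiEq l l') : PiEq l' l := Relation.EqvGen.symm _ _ h

@[trans] theorem trans (h : PiEq l l') (h' : PiEq l' l'') : PiEq l l'' :=
  Relation.EqvGen.trans _ _ _ h h'

theorem of_rStep (h : RStep l l') : PiEq l l' := .rel _ _ h

theorem map {B : Type} {f : List A → List B} (hf : ∀ ⦃l l'⦄, RStep l l' → RStep (f l) (f l'))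
    (h : PiEq l l') : PiEq (f l) (f l') := by
  induction h with
  | rel _ _ h => exact of_rStep (hf h)
  | refl => rfl
  | symm _ _ _ ih => exact ih.symm
  | trans _ _ _ _ _ ih₁ ih₂ => exact ih₁.trans ih₂

theorem eq_of_invariant {B : Sort*} {f : List A → B} (hf : ∀ ⦃l l'⦄, RStep l l' → f l = f l')
    (h : PiEq l l') : f l = f l' := by
  induction h with
  | rel _ _ h => exact hf h
  | refl => rfl
  | symm _ _ _ ih => exact ih.symm
  | trans _ _ _ _ _ ih₁ ih₂ => exact ih₁.trans ih₂

theorem append_right (h : PiEq l l') (t : List A) : PiEq (l ++ t) (l' ++ t) :=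
  h.map fun _ _ hs => hs.append_right t

theorem append_left (h : PiEq l l') (t : List A) : PiEq (t ++ l) (t ++ l') :=
  h.map fun _ _ hs => hs.append_left t

theorem cons (h : PiEq l l') (x : A) : PiEq (x :: l) (x :: l') := h.append_left [x]

theorem head?_eq (h : PiEq l l') : l.head? = l'.head? :=
  h.eq_of_invariant fun _ _ hs => hs.head?_eq

theorem getLast?_eq (h : PiEq l l') : l.getLast? = l'.getLast? :=
  h.eq_of_invariant fun _ _ hs => hs.getLast?_eq

theorem ne_nil (h : PiEq l l') (hl : l ≠ []) : l' ≠ [] := by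
  simpa [← List.head?_eq_none_iff, h.head?_eq] using hl

theorem append_tail {Xp : List A} (h : PiEq l l') (hXp : Xp.getLast? = l.head?) :
    PiEq (Xp ++ l.tail) (Xp ++ l'.tail) := by
  rcases Xp.eq_nil_or_concat with rfl | ⟨Xp, x, rfl⟩
  · obtain rfl : l = [] := by simpa using hXp.symm
    obtain rfl : l' = [] := List.head?_eq_none_iff.mp (h.head?_eq ▸ rfl)
    rfl
  · have hl : l.head? = some x := by simpa using hXp.symm
    obtain ⟨t, rfl⟩ := List.head?_eq_some_iff.mp hl
    obtain ⟨t', rfl⟩ := List.head?_eq_some_iff.mp (h.head?_eq ▸ hl)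
    simpa using h.append_left Xp

end PiEq

theorem piEq_backtrack (p s : List A) (x y : A) : PiEq (p ++ [x, y, x] ++ s) (p ++ [x] ++ s) :=
  .of_rStep (rStep_backtrack p s x y)

theorem piEq_stutter (p s : List A) (x : A) : PiEq (p ++ [x, x] ++ s) (p ++ [x] ++ s) :=
  .of_rStep (rStep_stutter p s x)

theorem piEq_cons_cons_self (a : A) (t : List A) : PiEq (a :: a :: t) (a :: t) := by
  simpa using piEq_stutter [] t a

theorem piEq_cons_backtrack (a b : A) (t : List A) : PiEq (a :: b :: a :: t) (a :: t) := by
  simpa using piEq_backtrack [] t a b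

end Reduction

section NormalForm

variable {A : Type}

namespace IsReduced

variable {a b c : A} {t : List A}

theorem ne_of_cons_cons (h : IsReduced (a :: b :: t)) : a ≠ b := by
  rintro rfl
  exact h (a :: t) (by simpa using rStep_stutter [] t a)

theorem ne_of_cons_cons_cons (h : IsReduced (a :: b :: c :: t)) : a ≠ c := by
  rintro rfl
  exact h (a :: t) (by simpa using rStep_backtrack [] t a b)

theorem tail (h : IsReduced (a :: t)) : IsReduced t :=
  fun l' hl' => h (a :: l') (hl'.append_left [a])

theorem head?_ne (h : IsReduced (a :: b :: t)) : t.head? ≠ some a := by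
  cases t
  · simp
  · simpa using Ne.symm h.ne_of_cons_cons_cons

theorem reverse {l : List A} (h : IsReduced l) : IsReduced l.reverse :=
  fun l' hs => h _ (by simpa using hs.reverse)

theorem of_append_left {l t : List A} (h : IsReduced (l ++ t)) : IsReduced l :=
  fun _ hs => h _ (hs.append_right t)

end IsReduced

theorem isReduced_nil : IsReduced ([] : List A) := by
  rintro l' (⟨p, s, x, y, h, -⟩ | ⟨p, s, x, h, -⟩) <;> simp at h

theorem isReduced_singleton (x : A) : IsReduced [x] := by
  rintro l' (⟨p, s, z, y, h, -⟩ | ⟨p, s, z, h, -⟩) <;>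
  · apply_fun List.length at h
    simp at h
    omega

theorem isReduced_cons {x : A} {r : List A} (hr : IsReduced r)
    (h1 : r.head? ≠ some x) (h2 : r.tail.head? ≠ some x) : IsReduced (x :: r) := by
  rintro _ (⟨_ | ⟨a, p⟩, s, z, y, h, -⟩ | ⟨_ | ⟨a, p⟩, s, z, h, -⟩) <;>
    simp only [List.nil_append, List.cons_append, List.cons.injEq] at h
  · exact h2 (by simp [h.2, h.1])
  · exact hr _ (h.2 ▸ rStep_backtrack p s z y)
  · exact h1 (by simp [h.2, h.1])
  · exact hr _ (h.2 ▸ rStep_stutter p s z)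

theorem isReduced_pair {x y : A} (h : x ≠ y) : IsReduced [x, y] :=
  isReduced_cons (isReduced_singleton y) (by simpa using Ne.symm h) (by simp)

theorem isReduced_triple {x y z : A} (h1 : x ≠ y) (h2 : y ≠ z) (h3 : x ≠ z) :
    IsReduced [x, y, z] :=
  isReduced_cons (isReduced_pair h2) (by simpa using Ne.symm h1) (by simpa using Ne.symm h3)

theorem isReduced_quadruple {x y z w : A} (h1 : x ≠ y) (h2 : y ≠ z) (h3 : z ≠ w)
    (h4 : x ≠ z) (h5 : y ≠ w) : IsReduced [x, y, z, w] :=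
  isReduced_cons (isReduced_triple h2 h3 h5) (by simpa using Ne.symm h1)
    (by simpa using Ne.symm h4)

open Classical in
/-- Prepend `x` to a reduced walk and cancel what this creates at the front. -/
noncomputable def reduceCons (x : A) : List A → List A
  | [] => [x]
  | y :: ys => if x = y then y :: ys else if ys.head? = some x then ys else x :: y :: ys

noncomputable def reduce : List A → List A
  | [] => []
  | x :: l => reduceCons x (reduce l)

@[simp] theorem reduceCons_nil (x : A) : reduceCons x [] = [x] := rfl

@[simp] theorem reduceCons_self (x : A) (ys : List A) : reduceCons x (x :: ys) = x :: ys := by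
  simp [reduceCons]

theorem reduceCons_backtrack {x y : A} {ys : List A} (hxy : x ≠ y) (h : ys.head? = some x) :
    reduceCons x (y :: ys) = ys := by
  simp [reduceCons, hxy, h]

theorem reduceCons_of_ne {x y : A} {ys : List A} (hxy : x ≠ y) (h : ys.head? ≠ some x) :
    reduceCons x (y :: ys) = x :: y :: ys := by
  simp [reduceCons, hxy, h]

@[simp] theorem reduce_cons (x : A) (l : List A) : reduce (x :: l) = reduceCons x (reduce l) :=
  rfl

theorem reflTransGen_reduceCons (x : A) (r : List A) :
    Relation.ReflTransGen RStep (x :: r) (reduceCons x r) := by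
  rcases r with _ | ⟨y, ys⟩
  · rfl
  by_cases hxy : x = y
  · subst hxy
    simpa using Relation.ReflTransGen.single (rStep_stutter [] ys x)
  by_cases hh : ys.head? = some x
  · obtain ⟨zs, rfl⟩ := List.head?_eq_some_iff.mp hh
    rw [reduceCons_backtrack hxy hh]
    simpa using Relation.ReflTransGen.single (rStep_backtrack [] zs x y)
  · rw [reduceCons_of_ne hxy hh]

theorem reflTransGen_reduce (l : List A) : Relation.ReflTransGen RStep l (reduce l) := by
  induction l with
  | nil => rfl
  | cons x l ih =>
    refine .trans ?_ (reflTransGen_reduceCons x (reduce l))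
    exact ih.lift (x :: ·) fun _ _ hs => hs.append_left [x]

theorem piEq_reduce (l : List A) : PiEq l (reduce l) :=
  Relation.EqvGen.reflTransGen_le_eqvGen _ _ _ (reflTransGen_reduce l)

theorem IsReduced.reduceCons {r : List A} (x : A) (hr : IsReduced r) :
    IsReduced (reduceCons x r) := by
  rcases r with _ | ⟨y, ys⟩
  · exact isReduced_singleton x
  by_cases hxy : x = y
  · subst hxy; simpa using hr
  by_cases hh : ys.head? = some x
  · rw [reduceCons_backtrack hxy hh]; exact hr.tail
  · rw [reduceCons_of_ne hxy hh]
    exact isReduced_cons hr (by simpa using Ne.symm hxy) (by simpa using hh)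

theorem isReduced_reduce (l : List A) : IsReduced (reduce l) := by
  induction l with
  | nil => exact isReduced_nil
  | cons x l ih => exact ih.reduceCons x

theorem head?_reduceCons (x : A) (r : List A) : (reduceCons x r).head? = some x := by
  rcases r with _ | ⟨y, ys⟩
  · rfl
  by_cases hxy : x = y
  · simp [hxy]
  by_cases hh : ys.head? = some x
  · rwa [reduceCons_backtrack hxy hh]
  · rw [reduceCons_of_ne hxy hh]; rfl

theorem reduceCons_of_head? {x : A} {s : List A} (h : s.head? = some x) : reduceCons x s = s := by
  obtain ⟨t, rfl⟩ := List.head?_eq_some_iff.mp h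
  simp

theorem reduceCons_reduceCons_of_head? {x y : A} {s : List A} (hs : IsReduced s)
    (h : s.head? = some x) : reduceCons x (reduceCons y s) = s := by
  obtain ⟨t, rfl⟩ := List.head?_eq_some_iff.mp h
  by_cases hyx : y = x
  · simp [hyx]
  by_cases ht : t.head? = some y
  · obtain ⟨t', rfl⟩ := List.head?_eq_some_iff.mp ht
    rw [reduceCons_backtrack hyx (by simp), reduceCons_of_ne (Ne.symm hyx) hs.head?_ne]
  · rw [reduceCons_of_ne hyx ht, reduceCons_backtrack (Ne.symm hyx) (by simp)]

end NormalForm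

section Groupoid

variable {A : Type}

theorem RStep.reduce_eq {l l' : List A} (h : RStep l l') : reduce l = reduce l' := by
  rcases h with ⟨p, s, x, y, rfl, rfl⟩ | ⟨p, s, x, rfl, rfl⟩ <;> induction p with
  | nil =>
    first
    | exact reduceCons_reduceCons_of_head? ((isReduced_reduce s).reduceCons x)
        (head?_reduceCons x _)
    | exact reduceCons_of_head? (head?_reduceCons x _)
  | cons a p ih => simpa using congrArg (reduceCons a) ih

theorem PiEq.reduce_eq {l l' : List A} (h : PiEq l l') : reduce l = reduce l' :=
  h.eq_of_invariant fun _ _ hs => hs.reduce_eq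

theorem IsReduced.reduce_eq {l : List A} (h : IsReduced l) : reduce l = l := by
  rcases (reflTransGen_reduce l).cases_head with h' | ⟨c, hc, -⟩
  · exact h'.symm
  · exact absurd hc (h c)

theorem isChain_reduce {R : A → A → Prop} {l : List A} (h : l.IsChain R) :
    (reduce l).IsChain R := by
  have key : ∀ l', Relation.ReflTransGen RStep l l' → l'.IsChain R := by
    intro l' hl'
    induction hl' with
    | refl => exact h
    | tail _ hs ih => exact hs.isChain ih
  exact key _ (reflTransGen_reduce l)

theorem length_reduceCons_le (x : A) (r : List A) :
    (reduceCons x r).length ≤ r.length + 1 := by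
  rcases r with _ | ⟨y, ys⟩
  · simp
  by_cases hxy : x = y
  · simp [hxy]
  by_cases hh : ys.head? = some x
  · rw [reduceCons_backtrack hxy hh]; simp; omega
  · rw [reduceCons_of_ne hxy hh]; simp

theorem length_reduce_le (l : List A) : (reduce l).length ≤ l.length := by
  induction l with
  | nil => simp [reduce]
  | cons x l ih => simpa using (length_reduceCons_le x (reduce l)).trans (by omega)

theorem PiEq.length_le_of_isReduced {l r : List A} (h : PiEq l r) (hr : IsReduced r) :
    r.length ≤ l.length := by
  simpa [h.reduce_eq, hr.reduce_eq] using length_reduce_le l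

theorem piEq_reverse_append_tail :
    ∀ (l : List A) {a : A}, l.getLast? = some a → PiEq (l.reverse ++ l.tail) [a]
  | [], _, h => by simp at h
  | [x], a, h => by
    obtain rfl : x = a := by simpa using h
    rfl
  | x :: y :: t, a, h => by
    have step : PiEq ((x :: y :: t).reverse ++ (x :: y :: t).tail)
        ((y :: t).reverse ++ (y :: t).tail) := by
      simpa using piEq_backtrack t.reverse t y x
    exact step.trans (piEq_reverse_append_tail (y :: t) (by simpa using h))

theorem piEq_append_reverse_tail (l : List A) {a : A} (h : l.head? = some a) :
    PiEq (l ++ l.reverse.tail) [a] := by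
  simpa using piEq_reverse_append_tail l.reverse (by simpa using h)

theorem PiEq.cancel_left {Z X Y : List A} {z : A} (hZ : Z.getLast? = some z)
    (h : PiEq (Z ++ X) (Z ++ Y)) : PiEq (z :: X) (z :: Y) := by
  have hZne : Z ≠ [] := by rintro rfl; simp at hZ
  have h1 : PiEq (Z.reverse ++ (Z ++ X).tail) (Z.reverse ++ (Z ++ Y).tail) :=
    h.append_tail (by simp [List.head?_append_of_ne_nil _ hZne])
  rw [List.tail_append_of_ne_nil hZne, List.tail_append_of_ne_nil hZne] at h1
  have hX := (piEq_reverse_append_tail Z hZ).append_right X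
  have hY := (piEq_reverse_append_tail Z hZ).append_right Y
  simp only [List.append_assoc, List.singleton_append] at hX hY
  exact hX.symm.trans (h1.trans hY)

theorem PiEq.cancel_cons {X Y : List A} {c h : A} (hX : X.head? = some h)
    (hY : Y.head? = some h) (hpe : PiEq (c :: X) (c :: Y)) : PiEq X Y := by
  obtain ⟨X', rfl⟩ := List.head?_eq_some_iff.mp hX
  obtain ⟨Y', rfl⟩ := List.head?_eq_some_iff.mp hY
  exact (piEq_cons_backtrack h c X').symm.trans ((hpe.cons h).trans (piEq_cons_backtrack h c Y'))

theorem PiEq.cancel_right {X Y T : List A} {t : A} (hT : T.head? = some t)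
    (h : PiEq (X ++ T) (Y ++ T)) : PiEq (X ++ [t]) (Y ++ [t]) := by
  have h1 := h.append_right T.reverse.tail
  simp only [List.append_assoc] at h1
  have hT' := piEq_append_reverse_tail T hT
  exact (hT'.append_left X).symm.trans (h1.trans (hT'.append_left Y))

theorem piEq_singleton_of_forall_eq {a : A} :
    ∀ {l : List A}, l ≠ [] → (∀ x ∈ l, x = a) → PiEq l [a]
  | [], h, _ => absurd rfl h
  | [x], _, hl => by rw [hl x (by simp)]
  | x :: y :: t, _, hl => by
    have ht : ∀ z ∈ a :: t, z = a := by
      rintro z (_ | ⟨_, hz⟩)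
      exacts [rfl, hl z (.tail _ (.tail _ hz))]
    rw [hl x (by simp), hl y (by simp)]
    exact (piEq_cons_cons_self a t).trans (piEq_singleton_of_forall_eq (by simp) ht)

theorem piEq_append_singleton_getLast {l : List A} {c : A} (h : l.getLast? = some c) :
    PiEq (l ++ [c]) l := by
  obtain ⟨l₀, rfl⟩ := List.getLast?_eq_some_iff.mp h
  simpa using piEq_stutter l₀ [] c

theorem piEq_inv_mul_of_mul_piEq {P X Y : List A} {x : A} (hP : P.getLast? = some x)
    (hX : X.head? = some x) (h : PiEq (P ++ X.tail) Y) : PiEq X (P.reverse ++ Y.tail) := by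
  have hP0 : P ≠ [] := by rintro rfl; simp at hP
  obtain ⟨X', rfl⟩ := List.head?_eq_some_iff.mp hX
  have h1 := h.append_tail (Xp := P.reverse) (by simp [List.head?_append_of_ne_nil _ hP0])
  rw [List.tail_append_of_ne_nil hP0] at h1
  have h2 := (piEq_reverse_append_tail P hP).append_right X'
  simp only [List.append_assoc, List.singleton_append, List.tail_cons] at h1 h2 ⊢
  exact h2.symm.trans h1

theorem piEq_mul_inv_of_mul_piEq {X P Y : List A} {p : A} (hX : X.getLast? = some p)
    (hP : P.head? = some p) (h : PiEq (X ++ P.tail) Y) : PiEq X (Y ++ P.reverse.tail) := by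
  have hP0 : P ≠ [] := by rintro rfl; simp at hP
  have h1 := (piEq_append_reverse_tail P hP).append_tail (Xp := X)
    (by rw [hX, List.head?_append_of_ne_nil _ hP0, hP])
  rw [List.tail_append_of_ne_nil hP0] at h1
  obtain ⟨X', rfl⟩ := List.getLast?_eq_some_iff.mp hX
  simp only [List.tail_cons, List.append_nil, ← List.append_assoc] at h1
  exact h1.symm.trans (h.append_right _)

end Groupoid

section Walks

variable {G : Dgraph V} {H : Dgraph X}

theorem IsHom.uAdj {f : V → X} (hf : IsHom G H f) {u v : V} (h : G.UAdj u v) :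
    H.UAdj (f u) (f v) :=
  h.imp (fun h => hf h) (fun h => hf h)

theorem isWalk_singleton (G : Dgraph V) (a : V) : IsWalk G a a [a] :=
  ⟨by simp, rfl, rfl, List.isChain_singleton a⟩

theorem isWalk_pair {a b : V} (h : G.UAdj a b) : IsWalk G a b [a, b] :=
  ⟨by simp, rfl, rfl, List.isChain_pair.mpr h⟩

namespace IsWalk

variable {a b c : V} {l l₁ l₂ : List V}

theorem ne_nil (h : IsWalk G a b l) : l ≠ [] := h.1

theorem head? (h : IsWalk G a b l) : l.head? = some a := h.2.1

theorem getLast? (h : IsWalk G a b l) : l.getLast? = some b := h.2.2.1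

theorem isChain (h : IsWalk G a b l) : l.IsChain G.UAdj := h.2.2.2

theorem cons (hadj : G.UAdj a b) (h : IsWalk G b c l) : IsWalk G a c (a :: l) := by
  obtain ⟨t, rfl⟩ := List.head?_eq_some_iff.mp h.head?
  refine ⟨by simp, rfl, by simpa using h.getLast?, ?_⟩
  exact List.isChain_cons_cons.mpr ⟨hadj, h.isChain⟩

theorem uncons {x y : V} {t : List V} (h : IsWalk G a b (x :: y :: t)) :
    x = a ∧ G.UAdj a y ∧ IsWalk G y b (y :: t) := by
  obtain rfl : x = a := by simpa using h.head?
  have hch := List.isChain_cons_cons.mp h.isChain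
  exact ⟨rfl, hch.1, by simp, rfl, by simpa using h.getLast?, hch.2⟩

theorem wcomp (h₁ : IsWalk G a b l₁) (h₂ : IsWalk G b c l₂) : IsWalk G a c (wcomp l₁ l₂) := by
  obtain ⟨t, rfl⟩ := List.head?_eq_some_iff.mp h₂.head?
  obtain ⟨l₀, rfl⟩ := List.getLast?_eq_some_iff.mp h₁.getLast?
  refine ⟨by simp [HRecoloring.wcomp], ?_, ?_, ?_⟩
  · simpa [HRecoloring.wcomp, List.head?_append_of_ne_nil] using h₁.head?
  · simpa [HRecoloring.wcomp, List.getLast?_append] using h₂.getLast?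
  · show (l₀ ++ [b] ++ t).IsChain G.UAdj
    exact h₁.isChain.append_overlap h₂.isChain (by simp)

theorem reverse (h : IsWalk G a b l) : IsWalk G b a l.reverse :=
  ⟨by simp [h.ne_nil], by simp [h.getLast?], by simp [h.head?],
    List.isChain_reverse.mpr (h.isChain.imp fun _ _ hab => hab.symm)⟩

theorem map {f : V → X} (hf : IsHom G H f) (h : IsWalk G a b l) :
    IsWalk H (f a) (f b) (l.map f) :=
  ⟨by simp [h.ne_nil], by simp [h.head?], by simp [h.getLast?],
    List.isChain_map_of_isChain f (fun _ _ hab => hf.uAdj hab) h.isChain⟩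

theorem snoc (h : IsWalk G a b l) (hadj : G.UAdj b c) : IsWalk G a c (l ++ [c]) := by
  simpa [HRecoloring.wcomp] using h.wcomp (isWalk_pair hadj)

end IsWalk

end Walks

section Forward

variable {G : Dgraph V} {H : Dgraph X}

def PushOrPullStep (G : Dgraph V) (σ σ' : V → X) : Prop :=
  (∃! u, σ u ≠ σ' u) ∧ ∀ u, σ u ≠ σ' u → ∀ w, G.UAdj u w → σ w = σ u ∨ σ w = σ' u

theorem AdjRecolSeq.isChain_pushOrPullStep {σs : List (V → X)} (hA : AdjRecolSeq G H σs)
    (hpp : PushOrPull G σs) : σs.IsChain (PushOrPullStep G) := by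
  have hA' : σs.IsChain _ := hA.2.2
  have hpp' : σs.IsChain _ := hpp
  rw [List.isChain_iff_getElem] at hA' hpp' ⊢
  exact fun i hi => ⟨(hA' i hi).1, hpp' i hi⟩

/-- The colours of `u` and `w` before and after the step span a square that commutes in
`π(H)`. -/
theorem PushOrPullStep.piEq_square {σ σ' : V → X} (h : PushOrPullStep G σ σ') {u w : V}
    (huw : G.UAdj u w) : PiEq [σ u, σ w, σ' w] [σ u, σ' u, σ' w] := by
  by_cases hu : σ u = σ' u <;> by_cases hw : σ w = σ' w
  · rw [← hu, ← hw]
    exact (piEq_stutter [σ u] [] (σ w)).trans (piEq_cons_cons_self (σ u) [σ w]).symm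
  · rw [← hu]
    rcases h.2 w hw u huw.symm with hc | hc
    · rw [hc]
    · rw [← hc]
      exact (piEq_cons_backtrack (σ u) (σ w) []).trans
        ((piEq_cons_cons_self _ _).trans (piEq_cons_cons_self _ _)).symm
  · rw [← hw]
    rcases h.2 u hu w huw with hc | hc
    · rw [hc]
      exact ((piEq_cons_cons_self _ _).trans (piEq_cons_cons_self _ _)).trans
        (piEq_cons_backtrack (σ u) (σ' u) []).symm
    · rw [hc]
  · obtain rfl : u = w := h.1.unique hu hw
    exact (piEq_cons_cons_self (σ u) _).trans (piEq_stutter [σ u] [] (σ' u)).symm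

@[simp] theorem colorWalk_nil (v : V) : colorWalk ([] : List (V → X)) v = [] := rfl

@[simp] theorem colorWalk_cons (σ : V → X) (σs : List (V → X)) (v : V) :
    colorWalk (σ :: σs) v = σ v :: colorWalk σs v := rfl

theorem colorWalk_append (τ τ' : List (V → X)) (v : V) :
    colorWalk (τ ++ τ') v = colorWalk τ v ++ colorWalk τ' v :=
  List.map_append ..

theorem colorWalk_head? {σs : List (V → X)} {σ₀ : V → X} (h : σs.head? = some σ₀) (v : V) :
    (colorWalk σs v).head? = some (σ₀ v) := by
  simp [colorWalk, h]

theorem colorWalk_getLast? {σs : List (V → X)} {σL : V → X} (h : σs.getLast? = some σL)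
    (v : V) : (colorWalk σs v).getLast? = some (σL v) := by
  simp [colorWalk, h]

theorem piEq_colorWalk_edge : ∀ {σs : List (V → X)} {σ₀ σL : V → X},
    σs.IsChain (PushOrPullStep G) → σs.head? = some σ₀ → σs.getLast? = some σL →
    ∀ {u w : V}, G.UAdj u w → PiEq (σ₀ u :: colorWalk σs w) (colorWalk σs u ++ [σL w])
  | [], _, _, _, h0, _, _, _, _ => by simp at h0
  | [σ], σ₀, σL, _, h0, hL, u, w, _ => by
    obtain rfl : σ = σ₀ := by simpa using h0
    obtain rfl : σ = σL := by simpa using hL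
    rfl
  | σ :: σ' :: rest, σ₀, σL, hch, h0, hL, u, w, huw => by
    obtain rfl : σ = σ₀ := by simpa using h0
    obtain ⟨hstep, hch'⟩ := List.isChain_cons_cons.mp hch
    have ih := piEq_colorWalk_edge hch' rfl (by simpa using hL) huw
    have hsq := (hstep.piEq_square huw).append_right (colorWalk rest w)
    simp only [colorWalk_cons, List.cons_append, List.nil_append] at hsq ih ⊢
    exact hsq.trans (ih.cons (σ u))

/-- The vertex walks of a push-or-pull sequence from `σ₀` to `σL` are homotopic along any
walk `W` from `u` to `v`: `σ₀(W) · S(v) = S(u) · σL(W)` in `π(H)`. -/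
theorem piEq_colorWalk_walk {σs : List (V → X)} {σ₀ σL : V → X}
    (hch : σs.IsChain (PushOrPullStep G)) (h0 : σs.head? = some σ₀)
    (hL : σs.getLast? = some σL) :
    ∀ {Wl : List V} {u v : V}, IsWalk G u v Wl →
      PiEq (Wl.map σ₀ ++ (colorWalk σs v).tail) (colorWalk σs u ++ (Wl.map σL).tail)
  | [], _, _, hW => absurd rfl hW.ne_nil
  | [x], u, v, hW => by
    obtain rfl : x = u := by simpa using hW.head?
    obtain rfl : x = v := by simpa using hW.getLast?
    obtain ⟨T, hT⟩ := List.head?_eq_some_iff.mp (colorWalk_head? h0 x)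
    simp [hT]
  | x :: y :: t, u, v, hW => by
    obtain ⟨rfl, hadj, hW'⟩ := hW.uncons
    have ih := (piEq_colorWalk_walk hch h0 hL hW').cons (σ₀ x)
    have hedge := (piEq_colorWalk_edge hch h0 hL hadj).append_right (t.map σL)
    simp only [List.map_cons, List.cons_append, List.tail_cons, List.append_assoc] at ih hedge ⊢
    exact ih.trans hedge

theorem PRealizable.topValid {α β : V → X} {q : V} {Q : List X}
    (h : PRealizable G H α β q Q) : TopValid G H α β q Q := by
  obtain ⟨σs, hA, h0, hL, hpp, hpe⟩ := h
  intro C hC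
  have hE := piEq_colorWalk_walk (hA.isChain_pushOrPullStep hpp) h0 hL hC
  have hαC : (C.map α).getLast? = (colorWalk σs q).head? := by
    simp [hC.getLast?, colorWalk_head? h0]
  have hQ : PiEq (Q ++ (C.map β).tail) (C.map α ++ Q.tail) :=
    (hpe.append_right _).symm.trans (hE.symm.trans (hpe.append_tail hαC))
  have hQlast : Q.getLast? = some (β q) := hpe.getLast?_eq ▸ colorWalk_getLast? hL q
  have hC0 : C.map α ≠ [] := by simp [hC.ne_nil]
  simpa [wcomp, List.tail_append_of_ne_nil hC0] using
    piEq_inv_mul_of_mul_piEq hQlast (by simp [hC.head?]) hQ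

end Forward

section Freezing

variable {G : Dgraph V}

theorem IsReduced.ne_of_eq_append {A : Type} {p s : List A} {a b c : A}
    (h : IsReduced (p ++ [a, b, c] ++ s)) : a ≠ b ∧ b ≠ c ∧ a ≠ c := by
  refine ⟨?_, ?_, ?_⟩ <;> rintro rfl
  · exact h _ (by simpa using rStep_stutter p (c :: s) a)
  · exact h _ (by simpa using rStep_stutter (p ++ [a]) s b)
  · exact h _ (rStep_backtrack p s a b)

theorem IsCycReduced.exists_adj_adj {σ : V → X} {v₀ : V} {C : List V}
    (hC : IsWalk G v₀ v₀ C) (h : IsCycReduced (C.map σ)) {x : V} (hx : x ∈ C) :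
    ∃ a c, G.UAdj x a ∧ G.UAdj x c ∧ σ a ≠ σ x ∧ σ c ≠ σ x ∧ σ a ≠ σ c := by
  obtain ⟨hred, hlen, hcyc⟩ := h
  rw [List.length_map] at hlen
  have hpos : x = v₀ ∨ ∃ p a c s, C = p ++ [a, x, c] ++ s := by
    obtain ⟨p, s, hps⟩ := List.append_of_mem hx
    rcases p.eq_nil_or_concat with rfl | ⟨p, a, rfl⟩
    · left; simpa [hps] using hC.head?
    rcases s with _ | ⟨c, s⟩
    · left; simpa [hps] using hC.getLast?
    · right; exact ⟨p, a, c, s, by simp [hps]⟩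
  rcases hpos with rfl | ⟨p, a, c, s, rfl⟩
  · obtain ⟨t, hCt⟩ := List.head?_eq_some_iff.mp hC.head?
    obtain ⟨r, hCr⟩ := List.head?_eq_some_iff.mp (show C.reverse.head? = some x by
      simpa using hC.getLast?)
    obtain ⟨c, t, rfl⟩ : ∃ c t', t = c :: t' := by
      rcases t with _ | ⟨c, t⟩
      · simp [hCt] at hlen
      · exact ⟨c, t, rfl⟩
    obtain ⟨a, r, rfl⟩ : ∃ a r', r = a :: r' := by
      rcases r with _ | ⟨a, r⟩
      · have := congrArg List.length hCr
        simp at this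
        omega
      · exact ⟨a, r, rfl⟩
    have hc : C[1]? = some c := by simp [hCt]
    have ha : C[C.length - 2]? = some a := by
      have h1 : C.reverse[1]? = some a := by simp [hCr]
      rwa [List.getElem?_reverse (by omega), show C.length - 1 - 1 = C.length - 2 by omega] at h1
    have hrev := hC.reverse
    have hred_rev : IsReduced (C.reverse.map σ) := by simpa using hred.reverse
    rw [hCr] at hrev hred_rev
    rw [hCt] at hC hred
    refine ⟨c, a, hC.uncons.2.1, hrev.uncons.2.1, ?_, ?_, fun heq => hcyc ?_⟩
    · exact (show IsReduced (σ x :: σ c :: t.map σ) by simpa using hred).ne_of_cons_cons.symm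
    · exact (show IsReduced (σ x :: σ a :: r.map σ) by simpa using hred_rev).ne_of_cons_cons.symm
    · simp only [List.get_eq_getElem, List.getElem_map, List.length_map]
      rw [(List.getElem_eq_iff _).mpr hc, (List.getElem_eq_iff _).mpr ha, heq]
  · have hch : [a, x, c].IsChain G.UAdj :=
      hC.isChain.infix ⟨p, s, rfl⟩
    obtain ⟨h1, h2, h3⟩ := IsReduced.ne_of_eq_append (by simpa using hred)
    simp only [List.isChain_cons_cons, List.isChain_singleton, and_true] at hch
    exact ⟨a, c, hch.1.symm, hch.2, h1, h2.symm, h3⟩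

theorem eqOn_of_isCycReduced {σ σ' : V → X}
    (hpp : ∀ u, σ u ≠ σ' u → ∀ w, G.UAdj u w → σ w = σ u ∨ σ w = σ' u)
    {v₀ : V} {C : List V} (hC : IsWalk G v₀ v₀ C) (h : IsCycReduced (C.map σ)) :
    ∀ x ∈ C, σ' x = σ x := by
  intro x hx
  by_contra hne
  obtain ⟨a, c, hxa, hxc, ha, hc, hac⟩ := h.exists_adj_adj hC hx
  rcases hpp x (Ne.symm hne) a hxa with h1 | h1
  · exact ha h1
  rcases hpp x (Ne.symm hne) c hxc with h2 | h2
  · exact hc h2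
  exact hac (h1.trans h2.symm)

theorem PushOrPull.eq_of_isCycReduced {v₀ : V} {C : List V} (hC : IsWalk G v₀ v₀ C) :
    ∀ {σs : List (V → X)} {σ₀ : V → X}, PushOrPull G σs → σs.head? = some σ₀ →
      IsCycReduced (C.map σ₀) → ∀ σ ∈ σs, ∀ x ∈ C, σ x = σ₀ x
  | [], _, _, h0, _ => by simp at h0
  | [σ], σ₀, _, h0, _ => by
    obtain rfl : σ = σ₀ := by simpa using h0
    simp
  | σ :: σ' :: rest, σ₀, hpp, h0, htight => by
    obtain rfl : σ = σ₀ := by simpa using h0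
    obtain ⟨hstep, hpp'⟩ := List.isChain_cons_cons.mp hpp
    have hfix := eqOn_of_isCycReduced hstep hC htight
    have htight' : IsCycReduced (C.map σ') := by rwa [List.map_congr_left hfix]
    have ih := PushOrPull.eq_of_isCycReduced hC hpp' rfl htight'
    rintro τ (_ | ⟨_, hτ⟩) x hx
    · rfl
    · rw [ih τ hτ x hx, hfix x hx]

theorem PushOrPull.reverse {σs : List (V → X)}
    (hA : σs.IsChain fun σ σ' => ∃! u, σ u ≠ σ' u) (hpp : PushOrPull G σs) :
    PushOrPull G σs.reverse := by
  have hpp' : σs.IsChain _ := hpp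
  show σs.reverse.IsChain _
  rw [List.isChain_reverse]
  rw [List.isChain_iff_getElem] at hA hpp' ⊢
  intro i hi u hu w hw
  by_cases hwu : w = u
  · exact Or.inl (hwu ▸ rfl)
  have hww : σs[i] w = σs[i + 1] w := by
    by_contra hne
    exact hwu ((hA i hi).unique hne (Ne.symm hu))
  rw [← hww]
  exact (hpp' i hi u (Ne.symm hu) w hw).symm

end Freezing

section ForwardCycles

variable {G : Dgraph V} {H : Dgraph X} {α β : V → X} {q : V} {Q : List X}

theorem PRealizable.piEq_of_isCycReduced (h : PRealizable G H α β q Q) {v₀ : V} {C : List V}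
    (hC : IsWalk G v₀ v₀ C) (htight : IsCycReduced (C.map α)) {v : V} (hv : v ∈ C)
    {Wl : List V} (hW : IsWalk G v q Wl) : PiEq Q (wcomp (Wl.map α).reverse (Wl.map β)) := by
  obtain ⟨σs, hA, h0, hL, hpp, hpe⟩ := h
  have hSv : PiEq (colorWalk σs v) [α v] := by
    refine piEq_singleton_of_forall_eq (by simp [colorWalk, hA.1]) fun y hy => ?_
    obtain ⟨σ, hσ, rfl⟩ := List.mem_map.mp hy
    exact hpp.eq_of_isCycReduced hC h0 htight σ hσ v hv
  have hE := piEq_colorWalk_walk (hA.isChain_pushOrPullStep hpp) h0 hL hW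
  have hAq : (Wl.map α).getLast? = some (α q) := by simp [hW.getLast?]
  have h1 : PiEq (Wl.map α ++ Q.tail) (α v :: (Wl.map β).tail) :=
    (hpe.append_tail (by rw [hAq, colorWalk_head? h0])).symm.trans
      (hE.trans (hSv.append_right _))
  simpa [wcomp] using piEq_inv_mul_of_mul_piEq hAq (hpe.head?_eq ▸ colorWalk_head? h0 q) h1

end ForwardCycles

section Conjugation

variable {G : Dgraph V} {H : Dgraph X} {α β : V → X} {q : V} {Q : List X}

theorem map_wcomp {A B : Type} (f : A → B) (l₁ l₂ : List A) :
    (wcomp l₁ l₂).map f = wcomp (l₁.map f) (l₂.map f) := by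
  simp [wcomp, List.map_tail]

theorem getLast?_wcomp {A : Type} {l₁ l₂ : List A} (h : l₁.getLast? = l₂.head?) :
    (wcomp l₁ l₂).getLast? = l₂.getLast? := by
  rcases l₂ with _ | ⟨b, _ | ⟨c, t⟩⟩
  · simp_all [wcomp]
  · simpa [wcomp] using h
  · rw [wcomp, List.tail_cons, List.getLast?_append_of_ne_nil _ (by simp),
      List.getLast?_cons_cons]

theorem conj_eq (Wl : List V) (Q : List X) :
    conj α β Wl Q = (Wl.map α).reverse ++ Q.tail ++ (Wl.map β).tail := rfl

theorem IsWalk.conj {v : V} {Wl : List V} (hW : IsWalk G q v Wl) (hα : IsHom G H α)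
    (hβ : IsHom G H β) (hQ : IsWalk H (α q) (β q) Q) : IsWalk H (α v) (β v) (conj α β Wl Q) :=
  ((hW.map hα).reverse.wcomp hQ).wcomp (hW.map hβ)

theorem conj_concat {Wl : List V} (hW : Wl ≠ []) (w : V) :
    conj α β (Wl ++ [w]) Q = α w :: conj α β Wl Q ++ [β w] := by
  simp [conj_eq, List.tail_append_of_ne_nil (by simpa using hW : Wl.map β ≠ [])]

theorem IsWalk.reduce {a b : X} {l : List X} (h : IsWalk H a b l) : IsWalk H a b (reduce l) :=
  ⟨(piEq_reduce l).ne_nil h.ne_nil, (piEq_reduce l).head?_eq ▸ h.head?,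
    (piEq_reduce l).getLast?_eq ▸ h.getLast?, isChain_reduce h.isChain⟩

theorem TopValid.piEq_conj (htv : TopValid G H α β q Q) (hQ : IsWalk H (α q) (β q) Q)
    {v : V} {W₁ W₂ : List V} (h₁ : IsWalk G q v W₁) (h₂ : IsWalk G q v W₂) :
    PiEq (conj α β W₁ Q) (conj α β W₂ Q) := by
  have hC := htv _ (h₁.wcomp h₂.reverse)
  rw [map_wcomp, map_wcomp, List.map_reverse, List.map_reverse] at hC
  set A₁ := W₁.map α
  set A₂ := W₂.map α
  set B₁ := W₁.map β
  set B₂ := W₂.map β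
  have hA₁ : A₁ ≠ [] := by simp [A₁, h₁.ne_nil]
  have hA₂ : A₂.reverse ≠ [] := by simp [A₂, h₂.ne_nil]
  -- `α(W₁) · α(W₂)⁻¹ · Q = Q · β(W₁) · β(W₂)⁻¹`
  have e1 := piEq_inv_mul_of_mul_piEq (P := Q.reverse) (x := α q)
    (X := A₁ ++ A₂.reverse.tail ++ Q.tail) (by simp [hQ.head?])
    (by simp [List.head?_append_of_ne_nil _ hA₁, A₁, h₁.head?])
    (by simpa [wcomp, List.tail_append_of_ne_nil hA₁] using hC.symm)
  have hA₁v : A₁.getLast? = some (α v) := by simp [A₁, h₁.getLast?]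
  have e2 := piEq_inv_mul_of_mul_piEq (P := A₁) (X := A₂.reverse ++ Q.tail) hA₁v
    (by simp [List.head?_append_of_ne_nil _ hA₂, A₂, h₂.getLast?])
    (by simpa [List.tail_append_of_ne_nil hA₂, wcomp] using e1)
  have hX : (A₁.reverse ++ Q.tail ++ B₁.tail).getLast? = some (β v) := by
    show (wcomp (wcomp A₁.reverse Q) B₁).getLast? = _
    have hAQ : (wcomp A₁.reverse Q).getLast? = some (β q) := by
      rw [getLast?_wcomp (by simp [A₁, h₁.head?, hQ.head?]), hQ.getLast?]
    rw [getLast?_wcomp (by simp [hAQ, B₁, h₁.head?])]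
    simp [B₁, h₁.getLast?]
  have hQ0 : Q ≠ [] := hQ.ne_nil
  have hB₁ : B₁ ≠ [] := by simp [B₁, h₁.ne_nil]
  have e3 := piEq_mul_inv_of_mul_piEq (P := B₂.reverse) hX (by simp [B₂, h₂.getLast?])
    (by simpa [List.tail_append_of_ne_nil, hQ0, hB₁, List.tail_reverse] using e2.symm)
  simpa [conj_eq] using e3

end Conjugation

section Recoloring

variable {G : Dgraph V} {H : Dgraph X}

theorem isChain_concat {A : Type} {R : A → A → Prop} {l : List A} {a b : A} (h : l.IsChain R)
    (hl : l.getLast? = some a) (hab : R a b) : (l ++ [b]).IsChain R :=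
  List.isChain_append.mpr ⟨h, List.isChain_singleton b, by simp [hl, hab]⟩

theorem AdjRecolSeq.concat {τ : List (V → X)} {σ σ' : V → X} (hA : AdjRecolSeq G H τ)
    (hL : τ.getLast? = some σ) (hσ' : IsHom G H σ')
    (h : (∃! u, σ u ≠ σ' u) ∧ ∀ u, σ u ≠ σ' u → H.Adj (σ u) (σ' u)) :
    AdjRecolSeq G H (τ ++ [σ']) := by
  refine ⟨by simp, fun φ hφ => ?_, isChain_concat hA.2.2 hL h⟩
  rcases List.mem_append.mp hφ with hφ | hφ
  · exact hA.2.1 φ hφ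
  · rwa [List.mem_singleton.mp hφ]

theorem PushOrPull.concat {τ : List (V → X)} {σ σ' : V → X} (hpp : PushOrPull G τ)
    (hL : τ.getLast? = some σ)
    (h : ∀ u, σ u ≠ σ' u → ∀ w, G.UAdj u w → σ w = σ u ∨ σ w = σ' u) :
    PushOrPull G (τ ++ [σ']) :=
  isChain_concat hpp hL h

variable [DecidableEq V]

theorem ne_update_iff {σ : V → X} {u v : V} {b : X} :
    σ u ≠ Function.update σ v b u ↔ u = v ∧ σ v ≠ b := by
  by_cases h : u = v
  · subst h; simp
  · simp [h]

theorem IsHom.update {σ : V → X} (hσ : IsHom G H σ) (hHrefl : H.IsReflexive)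
    (hHsym : H.IsSymmetric) {v : V} {b : X} (hb : H.Adj (σ v) b)
    (hmove : ∀ w, G.UAdj v w → σ w = σ v ∨ σ w = b) : IsHom G H (Function.update σ v b) := by
  intro x y hxy
  by_cases hx : x = v <;> by_cases hy : y = v
  · subst hx hy
    simpa using hHrefl b
  · subst hx
    rw [Function.update_self, Function.update_of_ne hy]
    rcases hmove y (Or.inl hxy) with hc | hc <;> rw [hc]
    exacts [hHsym _ _ hb, hHrefl b]
  · subst hy
    rw [Function.update_self, Function.update_of_ne hx]
    rcases hmove x (Or.inr hxy) with hc | hc <;> rw [hc]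
    exacts [hb, hHrefl b]
  · rw [Function.update_of_ne hx, Function.update_of_ne hy]
    exact hσ hxy

end Recoloring

section ReducedShapes

variable {A : Type}

theorem isReduced_of_getElem {l : List A} (h1 : ∀ k (hk : k + 1 < l.length), l[k] ≠ l[k + 1])
    (h2 : ∀ k (hk : k + 2 < l.length), l[k] ≠ l[k + 2]) : IsReduced l := by
  rintro _ (⟨p, s, x, y, rfl, -⟩ | ⟨p, s, x, rfl, -⟩)
  · exact h2 p.length (by simp) (by simp [List.getElem_append_right])
  · exact h1 p.length (by simp) (by simp [List.getElem_append_right])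

theorem reduce_append_singleton {l : List A} (hl : IsReduced l) (hne : l ≠ []) (c : A) :
    reduce (l ++ [c]) = l ++ [c] ∨ reduce (l ++ [c]) = l ∨ reduce (l ++ [c]) = l.dropLast := by
  obtain ⟨l₀, d, rfl⟩ := l.eq_nil_or_concat.resolve_left hne
  rw [List.concat_eq_append] at hl ⊢
  by_cases hdc : d = c
  · subst hdc
    right; left
    exact (by simpa using piEq_stutter l₀ [] d : PiEq (l₀ ++ [d] ++ [d]) _).reduce_eq.trans
      hl.reduce_eq
  by_cases hpen : l₀.getLast? = some c
  · obtain ⟨l₁, rfl⟩ := List.getLast?_eq_some_iff.mp hpen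
    right; right
    rw [List.dropLast_concat]
    have h : PiEq (l₁ ++ [c] ++ [d] ++ [c]) (l₁ ++ [c]) := by
      simpa using piEq_backtrack l₁ [] c d
    exact h.reduce_eq.trans hl.of_append_left.reduce_eq
  · left
    refine IsReduced.reduce_eq ?_
    have hrev : IsReduced (c :: d :: l₀.reverse) :=
      isReduced_cons (by simpa using hl.reverse) (by simpa using hdc) (by simpa using hpen)
    simpa using hrev.reverse

theorem head?_tail_eq_of_piEq {su sw b c : A} {rest L : List A}
    (hred : IsReduced (su :: b :: rest)) (hL : IsReduced L) (hLh : L.head? = some sw)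
    (hsw : sw ≠ su) (hb : sw ≠ b) (h : PiEq (su :: L) (su :: b :: rest ++ [c])) :
    L.tail.head? = some su := by
  obtain ⟨t, rfl⟩ := List.head?_eq_some_iff.mp hLh
  by_contra ht
  have hLHS : reduce (su :: sw :: t) = su :: sw :: t :=
    (isReduced_cons hL (by simpa using hsw) (by simpa using ht)).reduce_eq
  have key := h.reduce_eq
  rw [hLHS] at key
  rcases reduce_append_singleton hred (by simp) c with hc | hc | hc <;> rw [hc] at key
  · exact hb (by simpa using congrArg (fun l => l.tail.head?) key)
  · exact hb (by simpa using congrArg (fun l => l.tail.head?) key)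
  · rcases rest with _ | ⟨r, rest⟩
    · simp at key
    · exact hb (by simpa using congrArg (fun l => l.tail.head?) key)

theorem reduceCons_eq_singleton {c : A} {r : List A} (h : reduceCons c r = [c]) :
    r = [] ∨ r = [c] ∨ ∃ y, r = [y, c] ∧ y ≠ c := by
  rcases r with _ | ⟨y, ys⟩
  · exact Or.inl rfl
  by_cases hcy : c = y
  · subst hcy
    simp_all
  by_cases hh : ys.head? = some c
  · rw [reduceCons_backtrack hcy hh] at h
    exact Or.inr (Or.inr ⟨y, by rw [h], Ne.symm hcy⟩)
  · simp [reduceCons_of_ne hcy hh] at h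

theorem shape_of_piEq_cons {a b : A} {P X : List A} (hP : IsReduced P) (h₁ : PiEq P (a :: X))
    (h₂ : PiEq (b :: X) [b]) :
    P = [a] ∨ (P = [a, b] ∧ a ≠ b) ∨ ∃ y, P = [a, y, b] ∧ a ≠ y ∧ y ≠ b ∧ a ≠ b := by
  have hX : reduceCons b (reduce X) = [b] := by
    simpa [(isReduced_singleton b).reduce_eq] using h₂.reduce_eq
  have hPX : P = reduceCons a (reduce X) := by simpa [hP.reduce_eq] using h₁.reduce_eq
  rcases reduceCons_eq_singleton hX with hc | hc | ⟨y, hc, hy⟩ <;> rw [hc] at hPX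
  · exact Or.inl hPX
  · by_cases hab : a = b
    · subst hab
      simp [hPX]
    · exact Or.inr (Or.inl ⟨by rw [hPX, reduceCons_of_ne hab (by simp)], hab⟩)
  · by_cases hay : a = y
    · subst hay
      exact Or.inr (Or.inl ⟨by simp [hPX], hy⟩)
    by_cases hba : b = a
    · subst hba
      exact Or.inl (by rw [hPX, reduceCons_backtrack hay (by simp)])
    · exact Or.inr (Or.inr ⟨y, by rw [hPX, reduceCons_of_ne hay (by simpa using hba)],
        hay, hy, Ne.symm hba⟩)

theorem not_piEq_backtrack_of_ne {s w y c : A} (hsy : s ≠ y) (hyc : y ≠ c) (hsc : s ≠ c) :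
    ¬PiEq [s, w, s] [s, y, c, s] := fun h => by
  have := ((piEq_cons_backtrack s w []).symm.trans h).length_le_of_isReduced
    (isReduced_quadruple hsy hyc (Ne.symm hsc) hsc (Ne.symm hsy))
  simp at this

theorem eq_of_piEq_backtrack {s w y c d : A} (hsy : s ≠ y) (hyc : y ≠ c) (hsc : s ≠ c)
    (hsd : s ≠ d) (h : PiEq [s, w, s, d] [s, y, c, d]) : d = y := by
  have h' := (piEq_cons_backtrack s w [d]).symm.trans h
  by_contra hdy
  by_cases hcd : c = d
  · subst hcd
    have := (h'.trans (piEq_stutter [s, y] [] c)).length_le_of_isReduced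
      (isReduced_triple hsy hyc hsc)
    simp at this
  · have := h'.length_le_of_isReduced (isReduced_quadruple hsy hyc hcd hsc (Ne.symm hdy))
    simp at this

theorem false_of_piEq_shift {a : ℕ → A} (ha1 : ∀ n, a (n + 1) ≠ a n)
    (ha2 : ∀ n, a (n + 2) ≠ a n) {N s : ℕ} (hs : s = 1 ∨ s = 2)
    (h : PiEq [a (N + s + 1), a N] [a (N + s + 1), a (N + 2), a (N + 1), a N]) : False := by
  rcases hs with rfl | rfl
  · have := (h.trans (piEq_cons_cons_self _ _)).length_le_of_isReduced
      (isReduced_triple (ha1 (N + 1)) (ha1 N) (ha2 N))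
    simp at this
  · have := h.length_le_of_isReduced
      (isReduced_quadruple (ha1 (N + 2)) (ha1 (N + 1)) (ha1 N) (ha2 (N + 1)) (ha2 N))
    simp at this

end ReducedShapes

section Orbits

variable {G : Dgraph V}

theorem exists_iterate_eq_self [Finite V] (f : V → V) (x₀ : V) :
    ∃ i m, 0 < m ∧ f^[m] (f^[i] x₀) = f^[i] x₀ := by
  obtain ⟨i, j, hne, hij⟩ := Finite.exists_ne_map_eq_of_infinite fun n => f^[n] x₀
  rcases Nat.lt_or_gt_of_ne hne with h | h
  · exact ⟨i, j - i, by omega, by rw [← Function.iterate_add_apply, Nat.sub_add_cancel h.le, hij]⟩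
  · exact ⟨j, i - j, by omega, by rw [← Function.iterate_add_apply, Nat.sub_add_cancel h.le, hij]⟩

/-- Think of `b v` as the colour that `v` wants to take next: repeatedly stepping to a
neighbour `f v` that wants the colour of `v` and whose colour `v` does not want closes a cycle
whose image under `c` is cyclically reduced. -/
theorem exists_isCycReduced_of_forall_mem [Finite V] {c : V → X} {b : V → Option X}
    {S : Set V} (f : V → V)
    (hf : ∀ v ∈ S, f v ∈ S ∧ G.UAdj v (f v) ∧ b (f v) = some (c v) ∧ c (f v) ≠ c v ∧
      b v ≠ some (c (f v)))
    {x₀ : V} (hx₀ : x₀ ∈ S) :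
    ∃ x ∈ S, ∃ D : List V, IsWalk G x x D ∧ IsCycReduced (D.map c) ∧ ∀ n, f^[n] x ∈ D := by
  obtain ⟨i, m, hm, hper⟩ := exists_iterate_eq_self f x₀
  set x := f^[i] x₀
  have hmaps : Set.MapsTo f S S := fun v hv => (hf v hv).1
  have hx : x ∈ S := hmaps.iterate i hx₀
  have hspec := fun t => hf _ (hmaps.iterate t hx)
  simp only [← Function.iterate_succ_apply' f] at hspec
  have ha1 : ∀ t, c (f^[t + 1] x) ≠ c (f^[t] x) := fun t => (hspec t).2.2.2.1
  have ha2 : ∀ t, c (f^[t + 2] x) ≠ c (f^[t] x) := fun t heq =>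
    (hspec (t + 1)).2.2.2.2 (heq ▸ (hspec t).2.2.1)
  have hmod : ∀ n, f^[n] x = f^[n % m] x := fun n => by
    conv_lhs => rw [← Nat.mod_add_div n m, Function.iterate_add_apply]
    congr 1
    induction n / m with
    | zero => rfl
    | succ k ih => rw [Nat.mul_succ, Function.iterate_add_apply, hper, ih]
  have hm3 : 3 ≤ m := by
    by_contra hlt
    interval_cases m
    · exact ha1 0 (by simpa using congrArg c hper)
    · exact ha2 0 (by simpa using congrArg c hper)
  have hD : ∀ k (hk : k < (List.iterate f x (m + 1)).length),
      (List.iterate f x (m + 1))[k] = f^[k] x := fun k hk => List.getElem_iterate ..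
  refine ⟨x, hx, List.iterate f x (m + 1), ⟨by simp, by simp [List.iterate], ?_, ?_⟩,
    ⟨?_, by simp; omega, ?_⟩, fun n => ?_⟩
  · rw [List.getLast?_eq_getElem?, List.getElem?_iterate _ _ _ _ (by simp)]
    simpa using hper
  · exact List.isChain_iff_getElem.mpr fun k hk => by simpa only [hD] using (hspec k).2.1
  · refine isReduced_of_getElem (fun k hk => ?_) (fun k hk => ?_)
    · simpa only [List.getElem_map, hD] using (ha1 k).symm
    · simpa only [List.getElem_map, hD] using (ha2 k).symm
  · have hlast := (hspec (m - 1)).2.2.1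
    rw [Nat.succ_eq_add_one, Nat.sub_add_cancel hm, hper] at hlast
    simp only [List.get_eq_getElem, List.getElem_map, List.length_map, hD, List.length_iterate,
      show m + 1 - 2 = m - 1 by omega]
    intro heq
    exact (hspec 0).2.2.2.2 (hlast.trans (congrArg some heq.symm))
  · rw [hmod n]
    exact List.mem_iterate.mpr ⟨n % m, by have := Nat.mod_lt n hm; omega, rfl⟩

end Orbits

section Cycles

variable {G : Dgraph V} {H : Dgraph X} {α β : V → X} {q : V} {Q : List X}

theorem piEq_diamond (hGconn : G.WConn) {u v w : V} (hvu : G.UAdj v u) (hvw : G.UAdj v w)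
    (hv : ∀ Wl, IsWalk G v q Wl → PiEq Q (wcomp (Wl.map α).reverse (Wl.map β))) :
    PiEq [α v, β u] [α v, β w, β v, β u] := by
  obtain ⟨W, hW⟩ := hGconn q u
  obtain ⟨R, hR⟩ := List.head?_eq_some_iff.mp hW.reverse.head?
  have E₁ := hv _ (hW.reverse.cons hvu)
  have E₂ := hv _ (((hW.reverse.cons hvu).cons hvw.symm).cons hvw)
  rw [hR] at E₁ E₂
  have h := E₁.symm.trans E₂
  simp only [wcomp, List.map_cons, List.reverse_cons, List.tail_cons, List.append_assoc,
    List.cons_append, List.nil_append] at h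
  have h₁ : PiEq ((R.map α).reverse ++ [α u, α v] ++ (β u :: R.map β))
      ((R.map α).reverse ++ [α u, α v] ++ (α w :: α v :: β w :: β v :: β u :: R.map β)) := by
    simpa using h
  have h₂ := (h₁.cancel_left (by simp)).trans (piEq_cons_backtrack (α v) (α w) _)
  exact PiEq.cancel_right (X := [α v]) (Y := [α v, β w, β v]) (T := β u :: R.map β) rfl h₂

end Cycles

/-- A recoloring sequence `τ` from `α` to the current colouring `σ`, together with, for every
vertex `v`, the reduced walk `P v` that `v` still has to travel to `β v`. -/
structure PartialRealization (G : Dgraph V) (H : Dgraph X) (α β : V → X) (q : V)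
    (Q : List X) where
  τ : List (V → X)
  σ : V → X
  P : V → List X
  adjRecolSeq : AdjRecolSeq G H τ
  head?_eq : τ.head? = some α
  getLast?_eq : τ.getLast? = some σ
  pushOrPull : PushOrPull G τ
  isWalk : ∀ v, IsWalk H (σ v) (β v) (P v)
  isReduced : ∀ v, IsReduced (P v)
  piEq_square : ∀ u w, G.UAdj u w → PiEq (σ u :: P w) (P u ++ [β w])
  piEq_conj : ∀ v Wl, IsWalk G q v Wl → PiEq (colorWalk τ v ++ (P v).tail) (conj α β Wl Q)

namespace PartialRealization

variable {G : Dgraph V} {H : Dgraph X} {α β : V → X} {q : V} {Q : List X}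
  (S : PartialRealization G H α β q Q) {v : V} {b : X} {rest : List X}

theorem isHom_σ : IsHom G H S.σ :=
  S.adjRecolSeq.2.1 S.σ (List.mem_of_getLast? S.getLast?_eq)

theorem α_mem_τ : α ∈ S.τ := List.mem_of_head? S.head?_eq

theorem ne_of_P_eq (hPv : S.P v = S.σ v :: b :: rest) : S.σ v ≠ b :=
  (hPv ▸ S.isReduced v).ne_of_cons_cons

theorem adj_of_P_eq (hHsym : H.IsSymmetric) (hPv : S.P v = S.σ v :: b :: rest) :
    H.Adj (S.σ v) b :=
  ((hPv ▸ S.isWalk v).uncons.2.1).elim id (hHsym _ _)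

theorem eq_σ_of_isCycReduced {v₀ : V} {D : List V} (hD : IsWalk G v₀ v₀ D)
    (htight : IsCycReduced (D.map S.σ)) : ∀ φ ∈ S.τ, ∀ x ∈ D, φ x = S.σ x := fun φ hφ =>
  (S.pushOrPull.reverse (S.adjRecolSeq.2.2.imp fun _ _ h => h.1)).eq_of_isCycReduced hD
    (by simpa using S.getLast?_eq) htight φ (List.mem_reverse.mpr hφ)

theorem nonempty (htv : TopValid G H α β q Q) (hα : IsHom G H α) (hβ : IsHom G H β)
    (hQ : IsWalk H (α q) (β q) Q) (hGconn : G.WConn) :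
    Nonempty (PartialRealization G H α β q Q) := by
  choose W hW using hGconn q
  set R : V → List X := fun v => reduce (conj α β (W v) Q)
  have hRw : ∀ v, IsWalk H (α v) (β v) (R v) := fun v => ((hW v).conj hα hβ hQ).reduce
  have hR : ∀ v Wl, IsWalk G q v Wl → PiEq (R v) (conj α β Wl Q) := fun v Wl hWl =>
    (piEq_reduce _).symm.trans (htv.piEq_conj hQ (hW v) hWl)
  refine ⟨⟨[α], α, R, ⟨by simp, by simpa using hα, List.isChain_singleton _⟩, rfl, rfl,
    List.isChain_singleton _, hRw, fun v => isReduced_reduce _, fun u w huw => ?_,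
    fun v Wl hWl => ?_⟩⟩
  · obtain ⟨Tu, hTu⟩ := List.head?_eq_some_iff.mp (hRw u).head?
    have h1 : PiEq (R w) (α w :: R u ++ [β w]) := by
      have := hR w _ ((hW u).snoc huw)
      rw [conj_concat (hW u).ne_nil] at this
      exact this.trans (((hR u _ (hW u)).symm.cons (α w)).append_right _)
    refine (h1.cons (α u)).trans ?_
    rw [hTu]
    simpa using piEq_cons_backtrack (α u) (α w) (Tu ++ [β w])
  · obtain ⟨T, hT⟩ := List.head?_eq_some_iff.mp (hRw v).head?
    simpa [hT, colorWalk] using hR v Wl hWl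

section Recolor

variable [DecidableEq V]

theorem piEq_square_recolor (hPv : S.P v = S.σ v :: b :: rest)
    (hmove : ∀ w, G.UAdj v w → S.σ w = S.σ v ∨ S.σ w = b) {u w : V} (huw : G.UAdj u w) :
    PiEq (Function.update S.σ v b u :: Function.update S.P v (b :: rest) w)
      (Function.update S.P v (b :: rest) u ++ [β w]) := by
  have hsq := S.piEq_square u w huw
  by_cases hu : u = v <;> by_cases hw : w = v
  · subst u w
    have hlast : (b :: rest).getLast? = some (β v) := by
      simpa using (hPv ▸ S.isWalk v).getLast?
    simpa using (piEq_cons_cons_self b rest).trans (piEq_append_singleton_getLast hlast).symm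
  · subst u
    rw [hPv] at hsq
    simp only [Function.update_self, Function.update_of_ne hw]
    obtain ⟨Tw, hTw⟩ := List.head?_eq_some_iff.mp (S.isWalk w).head?
    rcases hmove w huw with hc | hc
    · rw [hTw, hc] at hsq ⊢
      have := (hsq.cons b).trans (by simpa using piEq_cons_backtrack b (S.σ v) (rest ++ [β w]))
      exact (piEq_stutter [b] Tw (S.σ v)).symm.trans (by simpa using this)
    · rw [hTw, hc] at hsq
      rw [hTw, hc]
      exact (piEq_cons_cons_self b Tw).trans
        ((hsq.cancel_cons (h := b) (by simp) (by simp)).trans (by simp))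
  · subst w
    rw [hPv] at hsq
    simp only [Function.update_self, Function.update_of_ne hu]
    rcases hmove u huw.symm with hc | hc <;> rw [hc] at hsq ⊢
    · exact (piEq_cons_cons_self (S.σ v) (b :: rest)).symm.trans hsq
    · exact (piEq_cons_cons_self b rest).trans ((piEq_cons_backtrack b (S.σ v) rest).symm.trans hsq)
  · simpa [Function.update_of_ne hu, Function.update_of_ne hw] using hsq

theorem piEq_conj_recolor (hPv : S.P v = S.σ v :: b :: rest) (u : V) (Wl : List V)
    (hWl : IsWalk G q u Wl) :
    PiEq (colorWalk (S.τ ++ [Function.update S.σ v b]) u ++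
      (Function.update S.P v (b :: rest) u).tail) (conj α β Wl Q) := by
  rw [colorWalk_append]
  by_cases hu : u = v
  · subst u
    simpa [hPv, colorWalk] using S.piEq_conj v Wl hWl
  · obtain ⟨cw, hcw⟩ := List.getLast?_eq_some_iff.mp (colorWalk_getLast? S.getLast?_eq u)
    refine PiEq.trans ?_ (S.piEq_conj u Wl hWl)
    rw [hcw]
    simpa [Function.update_of_ne hu] using piEq_stutter cw (S.P u).tail (S.σ u)

noncomputable def recolor (hHrefl : H.IsReflexive) (hHsym : H.IsSymmetric)
    (hPv : S.P v = S.σ v :: b :: rest) (hmove : ∀ w, G.UAdj v w → S.σ w = S.σ v ∨ S.σ w = b) :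
    PartialRealization G H α β q Q where
  τ := S.τ ++ [Function.update S.σ v b]
  σ := Function.update S.σ v b
  P := Function.update S.P v (b :: rest)
  adjRecolSeq := by
    refine S.adjRecolSeq.concat S.getLast?_eq
      (S.isHom_σ.update hHrefl hHsym (S.adj_of_P_eq hHsym hPv) hmove)
      ⟨⟨v, ne_update_iff.mpr ⟨rfl, S.ne_of_P_eq hPv⟩, fun u hu => (ne_update_iff.mp hu).1⟩,
        fun u hu => ?_⟩
    obtain rfl := (ne_update_iff.mp hu).1
    simpa using S.adj_of_P_eq hHsym hPv
  head?_eq := by simp [List.head?_append_of_ne_nil _ S.adjRecolSeq.1, S.head?_eq]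
  getLast?_eq := by simp
  pushOrPull := S.pushOrPull.concat S.getLast?_eq fun u hu => by
    obtain rfl := (ne_update_iff.mp hu).1
    simpa using hmove
  isWalk u := by
    by_cases hu : u = v
    · subst u
      simpa using (hPv ▸ S.isWalk v).uncons.2.2
    · simpa [Function.update_of_ne hu] using S.isWalk u
  isReduced u := by
    by_cases hu : u = v
    · subst u
      simpa using (hPv ▸ S.isReduced v).tail
    · simpa [Function.update_of_ne hu] using S.isReduced u
  piEq_square _ _ := S.piEq_square_recolor hPv hmove
  piEq_conj := S.piEq_conj_recolor hPv

theorem sum_wlen_recolor [Fintype V] (hHrefl : H.IsReflexive) (hHsym : H.IsSymmetric)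
    (hPv : S.P v = S.σ v :: b :: rest) (hmove : ∀ w, G.UAdj v w → S.σ w = S.σ v ∨ S.σ w = b) :
    ∑ u, wlen ((S.recolor hHrefl hHsym hPv hmove).P u) + 1 = ∑ u, wlen (S.P u) := by
  have hsplit : ∀ P : V → List X, ∑ u, wlen (P u) = wlen (P v) + ∑ u ∈ Finset.univ.erase v,
      wlen (P u) := fun P => (Finset.add_sum_erase _ _ (Finset.mem_univ v)).symm
  have hrest : ∑ u ∈ Finset.univ.erase v, wlen ((S.recolor hHrefl hHsym hPv hmove).P u) =
      ∑ u ∈ Finset.univ.erase v, wlen (S.P u) :=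
    Finset.sum_congr rfl fun u hu => by
      simp [recolor, Function.update_of_ne (Finset.ne_of_mem_erase hu)]
  rw [hsplit, hsplit (S.P), hrest]
  simp [recolor, hPv, wlen]
  omega

end Recolor

theorem pRealizable_of_forall_wlen_eq_zero (hQ : IsWalk H (α q) (β q) Q)
    (h : ∀ v, wlen (S.P v) = 0) : PRealizable G H α β q Q := by
  have hP : ∀ v, S.P v = [S.σ v] := fun v => by
    obtain ⟨t, ht⟩ := List.head?_eq_some_iff.mp (S.isWalk v).head?
    have := h v
    simp_all [wlen]
  have hσ : S.σ = β := funext fun v => by simpa [hP v] using (S.isWalk v).getLast?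
  refine ⟨S.τ, S.adjRecolSeq, S.head?_eq, S.getLast?_eq.trans (congrArg some hσ),
    S.pushOrPull, ?_⟩
  obtain ⟨T, hT⟩ := List.head?_eq_some_iff.mp hQ.head?
  simpa [hP q, conj_eq, hT] using S.piEq_conj q [q] (isWalk_singleton G q)

theorem exists_blocking_neighbor
    (hstuck : ¬∃ v b rest, S.P v = S.σ v :: b :: rest ∧
      ∀ w, G.UAdj v w → S.σ w = S.σ v ∨ S.σ w = b)
    (hv : 2 ≤ (S.P v).length) :
    ∃ w, 2 ≤ (S.P w).length ∧ G.UAdj v w ∧ (S.P w).tail.head? = some (S.σ v) ∧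
      S.σ w ≠ S.σ v ∧ (S.P v).tail.head? ≠ some (S.σ w) := by
  obtain ⟨t, ht⟩ := List.head?_eq_some_iff.mp (S.isWalk v).head?
  obtain ⟨b, rest, rfl⟩ : ∃ b rest, t = b :: rest := by
    rcases t with _ | ⟨b, rest⟩
    · simp [ht] at hv
    · exact ⟨b, rest, rfl⟩
  obtain ⟨w, hvw, hwv, hwb⟩ : ∃ w, G.UAdj v w ∧ S.σ w ≠ S.σ v ∧ S.σ w ≠ b := by
    by_contra! h
    exact hstuck ⟨v, b, rest, ht, fun w hw => or_iff_not_imp_left.mpr (h w hw)⟩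
  have hsecond := head?_tail_eq_of_piEq (ht ▸ S.isReduced v) (S.isReduced w)
    (S.isWalk w).head? hwv hwb (by simpa [ht] using S.piEq_square v w hvw)
  refine ⟨w, ?_, hvw, hsecond, hwv, by simpa [ht] using Ne.symm hwb⟩
  obtain ⟨t', ht'⟩ := List.head?_eq_some_iff.mp (S.isWalk w).head?
  rcases t' with _ | _ <;> simp_all

theorem shape_of_frozen (hGconn : G.WConn) {x : V} (hfrozen : ∀ φ ∈ S.τ, φ x = S.σ x)
    (hx : ∀ Wl, IsWalk G x q Wl → PiEq Q (wcomp (Wl.map α).reverse (Wl.map β))) :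
    S.P x = [S.σ x] ∨ (S.P x = [S.σ x, β x] ∧ S.σ x ≠ β x) ∨
      ∃ y, S.P x = [S.σ x, y, β x] ∧ S.σ x ≠ y ∧ y ≠ β x ∧ S.σ x ≠ β x := by
  obtain ⟨W, hW⟩ := hGconn q x
  have hconst : PiEq (colorWalk S.τ x) [S.σ x] := by
    refine piEq_singleton_of_forall_eq (by simp [colorWalk, S.adjRecolSeq.1]) fun y hy => ?_
    obtain ⟨φ, hφ, rfl⟩ := List.mem_map.mp hy
    exact hfrozen φ hφ
  have hPx : PiEq (S.P x) (conj α β W Q) := by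
    obtain ⟨t, ht⟩ := List.head?_eq_some_iff.mp (S.isWalk x).head?
    have := (hconst.append_right (S.P x).tail).symm.trans (S.piEq_conj x W hW)
    rwa [ht] at this ⊢
  set A := W.map α
  set B := W.map β
  have hQ' : PiEq Q (A ++ B.reverse.tail) := by
    simpa only [wcomp, List.map_reverse, List.reverse_reverse] using hx _ hW.reverse
  have hA : A ≠ [] := by simp [A, hW.ne_nil]
  have hconj : PiEq (conj α β W Q) (α x :: (B.reverse.tail ++ B.tail)) := by
    have h₁ := hQ'.append_tail (Xp := A.reverse)
      (by rw [hQ'.head?_eq]; simp [A, hW.head?, List.head?_append_of_ne_nil _ hA])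
    have h₂ := (piEq_reverse_append_tail A (a := α x) (by simp [A, hW.getLast?])).append_right
      (B.reverse.tail ++ B.tail)
    rw [List.tail_append_of_ne_nil hA] at h₁
    simp only [List.append_assoc, List.singleton_append] at h₁ h₂
    exact (h₁.append_right B.tail).trans (by simpa using h₂)
  obtain ⟨Br, hBr⟩ := List.head?_eq_some_iff.mp
    (show B.reverse.head? = some (β x) by simp [B, hW.getLast?])
  have hβ' : PiEq (β x :: (B.reverse.tail ++ B.tail)) [β x] := by
    simpa [hBr] using piEq_reverse_append_tail B (by simp [B, hW.getLast?])
  simpa [hfrozen α S.α_mem_τ] using shape_of_piEq_cons (S.isReduced x) (hPx.trans hconj) hβ'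

theorem exists_shift_of_frozen_chain (hGconn : G.WConn) {g : ℕ → V}
    (hlen : ∀ n, 2 ≤ (S.P (g n)).length) (hadj : ∀ n, G.UAdj (g n) (g (n + 1)))
    (hsecond : ∀ n, (S.P (g (n + 1))).tail.head? = some (S.σ (g n)))
    (ha1 : ∀ n, S.σ (g (n + 1)) ≠ S.σ (g n))
    (hfrozen : ∀ n, ∀ φ ∈ S.τ, φ (g n) = S.σ (g n))
    (hcond : ∀ n Wl, IsWalk G (g n) q Wl → PiEq Q (wcomp (Wl.map α).reverse (Wl.map β))) :
    ∃ N s, (s = 1 ∨ s = 2) ∧ ∀ n, β (g (N + n + s)) = S.σ (g (N + n)) := by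
  set a := fun n => S.σ (g n)
  set c := fun n => β (g n)
  have hshape : ∀ n, (S.P (g (n + 1)) = [a (n + 1), a n] ∧ c (n + 1) = a n) ∨
      (S.P (g (n + 1)) = [a (n + 1), a n, c (n + 1)] ∧ a n ≠ c (n + 1) ∧
        a (n + 1) ≠ c (n + 1)) := fun n => by
    have hs := hsecond n
    rcases S.shape_of_frozen hGconn (hfrozen (n + 1)) (hcond (n + 1)) with
      h | ⟨h, -⟩ | ⟨y, h, -, hyc, hac⟩ <;> rw [h] at hs
    · simpa [h] using hlen (n + 1)
    · simp only [List.tail_cons, List.head?_cons, Option.some.injEq] at hs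
      exact Or.inl ⟨by rw [h, hs], hs⟩
    · simp only [List.tail_cons, List.head?_cons, Option.some.injEq] at hs
      subst hs
      exact Or.inr ⟨h, hyc, hac⟩
  have hsq : ∀ n, PiEq (a (n + 1) :: S.P (g (n + 2))) (S.P (g (n + 1)) ++ [c (n + 2)]) :=
    fun n => S.piEq_square _ _ (hadj (n + 1))
  by_cases h3 : ∃ N, S.P (g (N + 1)) = [a (N + 1), a N, c (N + 1)]
  · obtain ⟨N, hN⟩ := h3
    have hall : ∀ n, S.P (g (N + n + 1)) = [a (N + n + 1), a (N + n), c (N + n + 1)] ∧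
        a (N + n) ≠ c (N + n + 1) ∧ a (N + n + 1) ≠ c (N + n + 1) := by
      intro n
      induction n with
      | zero => exact (hshape N).resolve_left fun h => by simp [h.1] at hN
      | succ n ih =>
        refine (hshape (N + n + 1)).resolve_left fun h2 => ?_
        have := hsq (N + n)
        rw [ih.1, h2.1, h2.2] at this
        exact not_piEq_backtrack_of_ne (ha1 (N + n)) ih.2.1 ih.2.2 this
    refine ⟨N, 2, Or.inr rfl, fun n => ?_⟩
    have h2 := hall (n + 1)
    rw [show N + (n + 1) = N + n + 1 by omega, show N + n + 1 + 1 = N + n + 2 by omega] at h2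
    have := hsq (N + n)
    rw [(hall n).1, h2.1] at this
    exact eq_of_piEq_backtrack (ha1 (N + n)) (hall n).2.1 (hall n).2.2 h2.2.1 this
  · refine ⟨0, 1, Or.inl rfl, fun n => ?_⟩
    simpa using ((hshape n).resolve_right fun h => h3 ⟨n, h.1⟩).2

theorem exists_move [Finite V] (hGconn : G.WConn)
    (hcycle : ∀ (v₀ : V) (C : List V), IsWalk G v₀ v₀ C → IsCycReduced (C.map α) →
      ∀ v ∈ C, ∀ Wl : List V, IsWalk G v q Wl → PiEq Q (wcomp (Wl.map α).reverse (Wl.map β)))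
    (h : ∃ v, wlen (S.P v) ≠ 0) :
    ∃ v b rest, S.P v = S.σ v :: b :: rest ∧ ∀ w, G.UAdj v w → S.σ w = S.σ v ∨ S.σ w = b := by
  by_contra hstuck
  set T := {v | 2 ≤ (S.P v).length}
  obtain ⟨v, hv⟩ := h
  have hvT : v ∈ T := by
    simp only [wlen] at hv
    show 2 ≤ (S.P v).length
    omega
  choose! f hf using fun v (hv : v ∈ T) => S.exists_blocking_neighbor hstuck hv
  obtain ⟨x, hx, D, hD, htight, hmem⟩ := exists_isCycReduced_of_forall_mem (c := S.σ)
    (b := fun v => (S.P v).tail.head?) f hf hvT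
  have hfrozen := S.eq_σ_of_isCycReduced hD htight
  have hcond := hcycle x D hD (by rwa [List.map_congr_left (hfrozen α S.α_mem_τ)])
  set g := fun n => f^[n] x
  have hg : ∀ n, 2 ≤ (S.P (g (n + 1))).length ∧ G.UAdj (g n) (g (n + 1)) ∧
      (S.P (g (n + 1))).tail.head? = some (S.σ (g n)) ∧ S.σ (g (n + 1)) ≠ S.σ (g n) ∧
      (S.P (g n)).tail.head? ≠ some (S.σ (g (n + 1))) := fun n => by
    simp only [g, Function.iterate_succ_apply']
    exact hf _ (Set.MapsTo.iterate (fun v hv => (hf v hv).1) n hx)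
  have ha2 : ∀ n, S.σ (g (n + 2)) ≠ S.σ (g n) := fun n heq =>
    (hg (n + 1)).2.2.2.2 (heq ▸ (hg n).2.2.1)
  obtain ⟨N, s, hs, hshift⟩ := S.exists_shift_of_frozen_chain hGconn
    (fun n => Set.MapsTo.iterate (fun v hv => (hf v hv).1) n hx) (fun n => (hg n).2.1)
    (fun n => (hg n).2.2.1) (fun n => (hg n).2.2.2.1)
    (fun n φ hφ => hfrozen φ hφ _ (hmem n)) (fun n => hcond _ (hmem n))
  have hdia := piEq_diamond hGconn (hg (N + s)).2.1.symm (hg (N + s + 1)).2.1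
    (hcond _ (hmem (N + s + 1)))
  rw [hfrozen α S.α_mem_τ _ (hmem _)] at hdia
  refine false_of_piEq_shift (fun n => (hg n).2.2.2.1) ha2 hs (a := fun n => S.σ (g n))
    (N := N) ?_
  have h0 := hshift 0
  have h1 := hshift 1
  have h2 := hshift 2
  rw [add_zero] at h0
  rw [show N + 1 + s = N + s + 1 by omega] at h1
  rw [show N + 2 + s = N + s + 1 + 1 by omega] at h2
  simp only [g] at hdia ⊢
  rwa [h0, h1, h2] at hdia

theorem pRealizable_of_nonempty [Fintype V] (hHrefl : H.IsReflexive) (hHsym : H.IsSymmetric)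
    (hQ : IsWalk H (α q) (β q) Q)
    (hprogress : ∀ S : PartialRealization G H α β q Q, (∃ v, wlen (S.P v) ≠ 0) →
      ∃ v b rest, S.P v = S.σ v :: b :: rest ∧ ∀ w, G.UAdj v w → S.σ w = S.σ v ∨ S.σ w = b)
    (h : Nonempty (PartialRealization G H α β q Q)) : PRealizable G H α β q Q := by
  classical
  obtain ⟨S⟩ := h
  induction hn : ∑ u, wlen (S.P u) using Nat.strong_induction_on generalizing S with
  | _ n ih =>
    by_cases h : ∀ v, wlen (S.P v) = 0
    · exact S.pRealizable_of_forall_wlen_eq_zero hQ h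
    obtain ⟨v, b, rest, hPv, hmove⟩ := hprogress S (not_forall.mp h)
    have hdec := S.sum_wlen_recolor hHrefl hHsym hPv hmove
    exact ih _ (by omega) (S.recolor hHrefl hHsym hPv hmove) rfl

end PartialRealization

end HRecoloring

open HRecoloring
theorem statement15_general {V X : Type} [Fintype V]
    (G : Dgraph V) (H : Dgraph X)
    (hHrefl : H.IsReflexive) (hHsym : H.IsSymmetric)
    (hGconn : G.WConn)
    (α β : V → X) (hα : IsHom G H α) (hβ : IsHom G H β)
    (q : V) (Q : List X)
    (hQ : IsWalk H (α q) (β q) Q) :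
    PRealizable G H α β q Q ↔
      (TopValid G H α β q Q ∧
       ∀ (v₀ : V) (C : List V), IsWalk G v₀ v₀ C → IsCycReduced (C.map α) →
         ∀ v ∈ C, ∀ Wl : List V, IsWalk G v q Wl →
           PiEq Q (wcomp (Wl.map α).reverse (Wl.map β))) := by
  constructor
  · intro h
    exact ⟨h.topValid, fun _ _ hC htight _ hv _ hW => h.piEq_of_isCycReduced hC htight hv hW⟩
  · rintro ⟨htv, hcycle⟩
    exact PartialRealization.pRealizable_of_nonempty hHrefl hHsym hQ
      (fun S h => S.exists_move hGconn hcycle h)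
      (PartialRealization.nonempty htv hα hβ hQ hGconn)

/-- Characterization of realizable walks for reflexive undirected graphs: a
reduced walk `Q` from `α q` to `β q` is `H`-realizable for `α, β, q` iff it is
topologically valid and, for every `α`-tight closed walk, every vertex `v` on
it and every walk `W` from `v` to `q`, `Q = α(W)⁻¹ · β(W)` in `π(H)`. -/
theorem statement15 {V X : Type} [Fintype V] [Fintype X]
    (G : Dgraph V) (H : Dgraph X)
    (hGrefl : G.IsReflexive) (hGsym : G.IsSymmetric)
    (hHrefl : H.IsReflexive) (hHsym : H.IsSymmetric)
    (hGconn : G.WConn) (hHconn : H.WConn)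
    (α β : V → X) (hα : IsHom G H α) (hβ : IsHom G H β)
    (q : V) (Q : List X)
    (hQ : IsWalk H (α q) (β q) Q) (hQred : IsReduced Q) :
    PRealizable G H α β q Q ↔
      (TopValid G H α β q Q ∧
       ∀ (v₀ : V) (C : List V), IsWalk G v₀ v₀ C → IsCycReduced (C.map α) →
         ∀ v ∈ C, ∀ Wl : List V, IsWalk G v q Wl →
           PiEq Q (wcomp (Wl.map α).reverse (Wl.map β))) :=
  statement15_general G H hHrefl hHsym hGconn α β hα hβ q Q hQ
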